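/- arXiv:1409.4076 — 4 statements merged into one kernel-verified Lean document; each statement's English description precedes it below -/
import Mathlib

section
/- Let $1<p<\infty$, $0<\alpha<n/p$, and $\sigma$ a nonnegative locally finite Borel measure on $\mathbb{R}^n$ with $\int_1^\infty (\sigma(B(0,r))/r^{n-\alpha p})^{1/(p-1)}\,dr/r<\infty$. Then $\liminf_{|x|\to\infty}\mathbf{W}_{\alpha,p}\sigma(x)=0$. -/
/-!
For `R > 0` we look for a point `x` with `R < ‖x‖ < 2R` at which `σ` has no large concentration
at any dyadic scale: averaging over this annulus gives, for every weight sequence `w`, a point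
with `w j * σ (B(x, R / 2^j)) ≲ (∑ w j 2^(-j n)) * σ (B(0, 3R))` for all `j` simultaneously.
With `c = n - α p`, the weights `w j ≈ 2^(j (c + n) / 2)` keep the sum finite (`c < n`) and
make the dyadic pieces of `∫_0^R` in `𝐖σ(x)` decay geometrically, so that part is at most a
constant times `(σ (B(0, 3R)) / R^c)^(1/(p-1))`, which in turn is controlled by the tail
`∫_{3R}^∞` of `𝐖σ(0)`. For `r > R` one has `B(x, r) ⊆ B(0, 3r)`, and the change of variables
`r ↦ 3r` bounds the rest of `𝐖σ(x)` by the same tail. The tail tends to `0` as `R → ∞`.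
-/

open MeasureTheory ENNReal

noncomputable def wolffTail (n : ℕ) (p α : ℝ)
    (σ : Measure (EuclideanSpace ℝ (Fin n))) (x : EuclideanSpace ℝ (Fin n)) (R : ℝ) : ℝ≥0∞ :=
  ∫⁻ r in Set.Ioi R,
    (σ (Metric.ball x r) / ENNReal.ofReal (r ^ ((n : ℝ) - α * p))) ^ (1 / (p - 1))
      / ENNReal.ofReal r

noncomputable def wolff (n : ℕ) (p α : ℝ)
    (σ : Measure (EuclideanSpace ℝ (Fin n))) (x : EuclideanSpace ℝ (Fin n)) : ℝ≥0∞ :=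
  wolffTail n p α σ x 0

open Metric Set Filter Topology Module

lemma tendsto_setLIntegral_Ioi_atTop {f : ℝ → ℝ≥0∞} {a : ℝ} (hf : ∫⁻ r in Ioi a, f r ≠ ∞) :
    Tendsto (fun R => ∫⁻ r in Ioi R, f r) atTop (𝓝 0) := by
  set ν := (volume.restrict (Ioi a)).withDensity f
  have hν : ∀ R, a ≤ R → ν (Ioi R) = ∫⁻ r in Ioi R, f r := fun R hR => by
    rw [withDensity_apply _ measurableSet_Ioi, Measure.restrict_restrict measurableSet_Ioi,
      Ioi_inter_Ioi, sup_of_le_left hR]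
  have hlim := tendsto_measure_iInter_atTop (μ := ν) (fun R => measurableSet_Ioi.nullMeasurableSet)
    (fun _ _ h => Ioi_subset_Ioi h) ⟨a, by rwa [hν a le_rfl]⟩
  rw [show ⋂ R : ℝ, Ioi R = ∅ from iInter_eq_empty_iff.2 fun r => ⟨r, lt_irrefl r⟩,
    measure_empty] at hlim
  exact hlim.congr' (eventually_ge_atTop a |>.mono fun R hR => hν R hR)

lemma lintegral_Ioi_comp_mul_left {f : ℝ → ℝ≥0∞} (hf : Measurable f) {c : ℝ} (hc : 0 < c)
    (a : ℝ) : ∫⁻ r in Ioi a, f (c * r) = ENNReal.ofReal c⁻¹ * ∫⁻ r in Ioi (c * a), f r := by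
  calc ∫⁻ r in Ioi a, f (c * r)
      = ∫⁻ r in Ioi (c * a), f r ∂(Measure.map (c * ·) volume) := by
        rw [setLIntegral_map measurableSet_Ioi hf (measurable_const_mul c),
          preimage_const_mul_Ioi₀ _ hc, mul_div_cancel_left₀ _ hc.ne']
    _ = _ := by
        rw [Real.map_volume_mul_left hc.ne', Measure.restrict_smul, lintegral_smul_measure,
          abs_of_pos (inv_pos.2 hc), smul_eq_mul]

lemma exists_forall_le_tsum_setLIntegral_div {α ι : Type*} [MeasurableSpace α] [Countable ι]
    {μ : Measure α} {A : Set α} {F : ι → α → ℝ≥0∞} (hF : ∀ i, AEMeasurable (F i) (μ.restrict A))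
    (hA₀ : μ A ≠ 0) (hA : μ A ≠ ∞) :
    ∃ x ∈ A, ∀ i, F i x ≤ (∑' i, ∫⁻ y in A, F i y ∂μ) / μ A := by
  obtain ⟨x, hxA, hx⟩ := exists_le_setLAverage hA₀ hA (AEMeasurable.tsum (L := .unconditional ι) hF)
  rw [setLAverage_eq, lintegral_tsum hF] at hx
  exact ⟨x, hxA, fun i => (ENNReal.le_tsum i).trans hx⟩

lemma div_ofReal_eq_ofReal_mul_div_ofReal_mul (X : ℝ≥0∞) {a : ℝ} (ha : 0 < a) (b : ℝ) :
    X / ENNReal.ofReal b = ENNReal.ofReal a * (X / ENNReal.ofReal (a * b)) := by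
  rw [ENNReal.ofReal_mul ha.le, ← mul_div_assoc,
    ENNReal.mul_div_mul_left _ _ (by simpa using ha) ofReal_ne_top]

section MetricSpace

variable {X : Type*} [PseudoMetricSpace X] [MeasurableSpace X] [BorelSpace X]
  [SecondCountableTopology X]

lemma measurableSet_setOf_dist_lt (r : ℝ) : MeasurableSet {z : X × X | dist z.2 z.1 < r} :=
  (isOpen_lt (continuous_snd.dist continuous_fst) continuous_const).measurableSet

lemma measurable_measure_ball (σ : Measure X) [SFinite σ] (r : ℝ) :
    Measurable fun x => σ (ball x r) :=
  measurable_measure_prodMk_left (measurableSet_setOf_dist_lt r)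

lemma lintegral_measure_ball_comm (μ ν : Measure X) [SFinite μ] [SFinite ν] (r : ℝ) :
    ∫⁻ x, ν (ball x r) ∂μ = ∫⁻ y, μ (ball y r) ∂ν := by
  calc ∫⁻ x, ν (ball x r) ∂μ = μ.prod ν {z : X × X | dist z.2 z.1 < r} :=
        (Measure.prod_apply (measurableSet_setOf_dist_lt r)).symm
    _ = ∫⁻ y, μ ((·, y) ⁻¹' {z : X × X | dist z.2 z.1 < r}) ∂ν :=
        Measure.prod_apply_symm (measurableSet_setOf_dist_lt r)
    _ = ∫⁻ y, μ (ball y r) ∂ν := lintegral_congr fun y => by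
        congr 1
        ext x
        simp [dist_comm]

end MetricSpace

section FiniteDimensional

variable {E : Type*} [NormedAddCommGroup E] [NormedSpace ℝ E] [FiniteDimensional ℝ E]
  [MeasurableSpace E] [BorelSpace E]

lemma setLIntegral_measure_ball_le (μ σ : Measure E) [μ.IsAddHaarMeasure] [SFinite σ]
    {A : Set E} {ρ : ℝ} (hA : A ⊆ ball 0 ρ) (r : ℝ) :
    ∫⁻ x in A, σ (ball x r) ∂μ ≤ μ (ball 0 r) * σ (ball 0 (ρ + r)) := by
  rw [lintegral_measure_ball_comm, ← lintegral_indicator_const measurableSet_ball]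
  refine lintegral_mono fun y => ?_
  by_cases hy : y ∈ ball (0 : E) (ρ + r)
  · rw [indicator_of_mem hy, ← μ.addHaar_ball_center y]
    exact Measure.restrict_apply_le _ _
  · have hdisj : ball y r ∩ A = ∅ := eq_empty_of_forall_notMem fun x ⟨hxy, hxA⟩ => hy <| by
      have hx := hA hxA
      rw [mem_ball] at hx hxy ⊢
      linarith [dist_triangle y x 0, dist_comm x y]
    rw [Measure.restrict_apply measurableSet_ball, hdisj, measure_empty]
    exact zero_le

lemma addHaar_ball_two_mul_sdiff_closedBall (μ : Measure E) [μ.IsAddHaarMeasure] [Nontrivial E]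
    {R : ℝ} (hR : 0 < R) :
    μ (ball 0 (2 * R) \ closedBall 0 R) =
      ENNReal.ofReal (R ^ finrank ℝ E) * ENNReal.ofReal (2 ^ finrank ℝ E - 1) * μ (ball 0 1) := by
  rw [measure_sdiff (closedBall_subset_ball (by linarith))
    measurableSet_closedBall.nullMeasurableSet measure_closedBall_lt_top.ne,
    μ.addHaar_ball _ (by linarith), μ.addHaar_closedBall _ hR.le,
    ← ENNReal.sub_mul (fun _ _ => measure_ball_lt_top.ne), ← ENNReal.ofReal_sub _ (by positivity),
    ← ENNReal.ofReal_mul (by positivity)]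
  congr 2
  ring

lemma setLIntegral_annulus_measure_ball_le (μ σ : Measure E) [μ.IsAddHaarMeasure] [SFinite σ]
    [Nontrivial E] {R s : ℝ} (hR : 0 < R) (hs : s ∈ Icc 0 1) :
    ∫⁻ y in ball 0 (2 * R) \ closedBall 0 R, σ (ball y (R * s)) ∂μ ≤
      ENNReal.ofReal (s ^ finrank ℝ E) * σ (ball 0 (3 * R)) *
        (ENNReal.ofReal (R ^ finrank ℝ E) * μ (ball 0 1)) :=
  calc ∫⁻ y in ball 0 (2 * R) \ closedBall 0 R, σ (ball y (R * s)) ∂μ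
      ≤ μ (ball 0 (R * s)) * σ (ball 0 (3 * R)) := by
        refine (setLIntegral_measure_ball_le μ σ sdiff_subset _).trans ?_
        gcongr
        nlinarith [hs.2]
    _ = _ := by
        rw [μ.addHaar_ball _ (mul_nonneg hR.le hs.1), mul_pow, ENNReal.ofReal_mul (by positivity)]
        ring

lemma exists_forall_mul_measure_ball_le [Nontrivial E] (σ : Measure E) [SFinite σ] {ι : Type*}
    [Countable ι] {R : ℝ} (hR : 0 < R) {s : ι → ℝ} (hs : ∀ i, s i ∈ Icc 0 1) (w : ι → ℝ≥0∞) :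
    ∃ x : E, R < ‖x‖ ∧ ‖x‖ < 2 * R ∧ ∀ i, w i * σ (ball x (R * s i)) ≤
      (∑' i, w i * ENNReal.ofReal (s i ^ finrank ℝ E)) / ENNReal.ofReal (2 ^ finrank ℝ E - 1) *
        σ (ball 0 (3 * R)) := by
  set μ : Measure E := .addHaar
  set A : Set E := ball 0 (2 * R) \ closedBall 0 R
  have hμA := addHaar_ball_two_mul_sdiff_closedBall μ hR
  set d := finrank ℝ E
  have hd : (1 : ℝ) < 2 ^ d := one_lt_pow₀ (by norm_num) finrank_pos.ne'
  have hv₀ := (measure_ball_pos μ (0 : E) one_pos).ne'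
  have hRv₀ : ENNReal.ofReal (R ^ d) * μ (ball 0 1) ≠ 0 := mul_ne_zero (by simp [hR]) hv₀
  have hRv : ENNReal.ofReal (R ^ d) * μ (ball 0 1) ≠ ∞ :=
    mul_ne_top ofReal_ne_top measure_ball_lt_top.ne
  obtain ⟨x, ⟨hx2R, hxR⟩, hx⟩ := exists_forall_le_tsum_setLIntegral_div (μ := μ) (A := A)
    (F := fun i x => w i * σ (ball x (R * s i)))
    (fun i => ((measurable_measure_ball σ _).const_mul _).aemeasurable)
    (by rw [hμA]; simp [hR, hd, hv₀])
    (by rw [hμA]; exact mul_ne_top (mul_ne_top ofReal_ne_top ofReal_ne_top) measure_ball_lt_top.ne)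
  refine ⟨x, by simpa using hxR, by simpa using hx2R, fun i => (hx i).trans ?_⟩
  have hball : ∀ i, ∫⁻ y in A, w i * σ (ball y (R * s i)) ∂μ ≤
      w i * ENNReal.ofReal (s i ^ d) * σ (ball 0 (3 * R)) *
        (ENNReal.ofReal (R ^ d) * μ (ball 0 1)) := fun i => by
    rw [lintegral_const_mul _ (measurable_measure_ball σ _), mul_assoc, mul_assoc]
    gcongr
    rw [← mul_assoc]
    exact setLIntegral_annulus_measure_ball_le μ σ hR (hs i)
  calc (∑' i, ∫⁻ y in A, w i * σ (ball y (R * s i)) ∂μ) / μ A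
      ≤ (∑' i, w i * ENNReal.ofReal (s i ^ d)) * σ (ball 0 (3 * R)) *
          (ENNReal.ofReal (R ^ d) * μ (ball 0 1)) /
            (ENNReal.ofReal (2 ^ d - 1) * (ENNReal.ofReal (R ^ d) * μ (ball 0 1))) := by
        rw [← ENNReal.tsum_mul_right, ← ENNReal.tsum_mul_right, hμA]
        gcongr ?_ / ?_
        · exact ENNReal.tsum_le_tsum hball
        · exact (by ring : _ = _).le
    _ = _ := by
        rw [ENNReal.mul_div_mul_right _ _ hRv₀ hRv, div_eq_mul_inv, div_eq_mul_inv,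
          mul_right_comm]

end FiniteDimensional

/-- The integrand of `wolffTail n p α σ x` is `wolffIntegrand (n - α * p) (1 / (p - 1))`
applied to `m r = σ (ball x r)`. -/
noncomputable def wolffIntegrand (c q : ℝ) (m : ℝ → ℝ≥0∞) (r : ℝ) : ℝ≥0∞ :=
  (m r / ENNReal.ofReal (r ^ c)) ^ q / ENNReal.ofReal r

section WolffIntegrand

variable {c q : ℝ} {m : ℝ → ℝ≥0∞}

lemma Monotone.measurable_wolffIntegrand (hm : Monotone m) : Measurable (wolffIntegrand c q m) :=
  ((hm.measurable.div (measurable_id.pow_const c).ennreal_ofReal).pow_const q).div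
    measurable_id.ennreal_ofReal

lemma wolffIntegrand_le_of_mem_Ioc (hm : Monotone m) (hc : 0 ≤ c) (hq : 0 ≤ q) {a b r : ℝ}
    (ha : 0 < a) (hr : r ∈ Ioc a b) :
    wolffIntegrand c q m r ≤ (m b / ENNReal.ofReal (a ^ c)) ^ q / ENNReal.ofReal a := by
  unfold wolffIntegrand
  gcongr
  · exact hm hr.2
  · exact hr.1.le
  · exact hr.1.le

lemma le_wolffIntegrand_of_mem_Ioc (hm : Monotone m) (hc : 0 ≤ c) (hq : 0 ≤ q) {a b r : ℝ}
    (ha : 0 < a) (hr : r ∈ Ioc a b) :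
    (m a / ENNReal.ofReal (b ^ c)) ^ q / ENNReal.ofReal b ≤ wolffIntegrand c q m r := by
  unfold wolffIntegrand
  have hr0 := ha.trans hr.1
  gcongr
  · exact hm hr.1.le
  · exact hr.2
  · exact hr.2

lemma setLIntegral_Ioc_half_wolffIntegrand_le (hm : Monotone m) (hc : 0 ≤ c) (hq : 0 ≤ q)
    {b : ℝ} (hb : 0 < b) :
    ∫⁻ r in Ioc (b / 2) b, wolffIntegrand c q m r ≤ (m b / ENNReal.ofReal ((b / 2) ^ c)) ^ q := by
  have hb2 : 0 < b / 2 := half_pos hb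
  calc ∫⁻ r in Ioc (b / 2) b, wolffIntegrand c q m r
      ≤ ∫⁻ _ in Ioc (b / 2) b,
          (m b / ENNReal.ofReal ((b / 2) ^ c)) ^ q / ENNReal.ofReal (b / 2) :=
        setLIntegral_mono' measurableSet_Ioc fun r hr =>
          wolffIntegrand_le_of_mem_Ioc hm hc hq hb2 hr
    _ = (m b / ENNReal.ofReal ((b / 2) ^ c)) ^ q := by
        rw [setLIntegral_const, Real.volume_Ioc, show b - b / 2 = b / 2 by ring,
          ENNReal.div_mul_cancel (by simpa using hb2) ofReal_ne_top]

lemma le_two_mul_setLIntegral_Ioc_wolffIntegrand (hm : Monotone m) (hc : 0 ≤ c) (hq : 0 ≤ q)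
    {a : ℝ} (ha : 0 < a) :
    (m a / ENNReal.ofReal ((2 * a) ^ c)) ^ q ≤
      2 * ∫⁻ r in Ioc a (2 * a), wolffIntegrand c q m r := by
  set X := (m a / ENNReal.ofReal ((2 * a) ^ c)) ^ q
  have hconst : X / ENNReal.ofReal (2 * a) * ENNReal.ofReal a ≤
      ∫⁻ r in Ioc a (2 * a), wolffIntegrand c q m r := by
    calc X / ENNReal.ofReal (2 * a) * ENNReal.ofReal a
        = ∫⁻ _ in Ioc a (2 * a), X / ENNReal.ofReal (2 * a) := by
          rw [setLIntegral_const, Real.volume_Ioc, two_mul, add_sub_cancel_right]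
      _ ≤ _ := setLIntegral_mono' measurableSet_Ioc fun r hr =>
          le_wolffIntegrand_of_mem_Ioc hm hc hq ha hr
  calc X = 2 * (X / ENNReal.ofReal (2 * a) * ENNReal.ofReal a) := by
        rw [ENNReal.ofReal_mul zero_le_two, ENNReal.ofReal_ofNat, mul_comm _ (ENNReal.ofReal a),
          ← mul_div_assoc, mul_comm _ X,
          ENNReal.mul_div_mul_right _ _ (by simpa using ha) ofReal_ne_top,
          ENNReal.mul_div_cancel two_ne_zero ofNat_ne_top]
    _ ≤ _ := by gcongr

lemma setLIntegral_Ioc_zero_wolffIntegrand_le_tsum (hm : Monotone m) (hc : 0 ≤ c) (hq : 0 ≤ q)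
    {R : ℝ} (hR : 0 < R) :
    ∫⁻ r in Ioc 0 R, wolffIntegrand c q m r ≤
      ∑' j : ℕ, (m (R / 2 ^ j) / ENNReal.ofReal ((R / 2 ^ j / 2) ^ c)) ^ q := by
  have hcover : Ioc 0 R ⊆ ⋃ j : ℕ, Ioc (R / 2 ^ j / 2) (R / 2 ^ j) := by
    intro r ⟨hr0, hrR⟩
    obtain ⟨j, hj, hj'⟩ := exists_nat_pow_near ((one_le_div hr0).2 hrR) one_lt_two
    refine mem_iUnion.2 ⟨j, ?_, ?_⟩
    · rw [div_div, ← pow_succ, div_lt_iff₀ (by positivity)]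
      rwa [div_lt_iff₀ hr0, mul_comm] at hj'
    · rwa [le_div_iff₀ (by positivity), mul_comm, ← le_div_iff₀ hr0]
  calc ∫⁻ r in Ioc 0 R, wolffIntegrand c q m r
      ≤ ∫⁻ r in ⋃ j : ℕ, Ioc (R / 2 ^ j / 2) (R / 2 ^ j), wolffIntegrand c q m r :=
        lintegral_mono_set hcover
    _ ≤ ∑' j : ℕ, ∫⁻ r in Ioc (R / 2 ^ j / 2) (R / 2 ^ j), wolffIntegrand c q m r :=
        lintegral_iUnion_le _ _
    _ ≤ _ := ENNReal.tsum_le_tsum fun j =>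
        setLIntegral_Ioc_half_wolffIntegrand_le hm hc hq (by positivity)

lemma wolffIntegrand_comp_mul_left (hq : 0 ≤ q) {k r : ℝ} (hk : 0 < k) (hr : 0 < r) :
    wolffIntegrand c q (fun r => m (k * r)) r =
      ENNReal.ofReal (k ^ (c * q) * k) * wolffIntegrand c q m (k * r) := by
  unfold wolffIntegrand
  rw [div_ofReal_eq_ofReal_mul_div_ofReal_mul (m (k * r)) (Real.rpow_pos_of_pos hk c) (r ^ c),
    ← Real.mul_rpow hk.le hr.le, ENNReal.mul_rpow_of_nonneg _ _ hq,
    ENNReal.ofReal_rpow_of_pos (Real.rpow_pos_of_pos hk c), ← Real.rpow_mul hk.le, mul_div_assoc,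
    div_ofReal_eq_ofReal_mul_div_ofReal_mul _ hk r, ← mul_assoc,
    ← ENNReal.ofReal_mul (by positivity)]

lemma setLIntegral_Ioi_wolffIntegrand_le {m₁ m₂ : ℝ → ℝ≥0∞} (hm₂ : Monotone m₂) (hq : 0 ≤ q)
    {R k : ℝ} (hR : 0 ≤ R) (hk : 0 < k) (h : ∀ r > R, m₁ r ≤ m₂ (k * r)) :
    ∫⁻ r in Ioi R, wolffIntegrand c q m₁ r ≤
      ENNReal.ofReal (k ^ (c * q)) * ∫⁻ r in Ioi (k * R), wolffIntegrand c q m₂ r := by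
  calc ∫⁻ r in Ioi R, wolffIntegrand c q m₁ r
      ≤ ∫⁻ r in Ioi R, wolffIntegrand c q (fun r => m₂ (k * r)) r :=
        setLIntegral_mono' measurableSet_Ioi fun r hr => by
          unfold wolffIntegrand
          gcongr
          exact h r hr
    _ = ∫⁻ r in Ioi R, ENNReal.ofReal (k ^ (c * q) * k) * wolffIntegrand c q m₂ (k * r) :=
        setLIntegral_congr_fun measurableSet_Ioi fun r hr =>
          wolffIntegrand_comp_mul_left hq hk (hR.trans_lt hr)
    _ = ENNReal.ofReal (k ^ (c * q) * k) *
          (ENNReal.ofReal k⁻¹ * ∫⁻ r in Ioi (k * R), wolffIntegrand c q m₂ r) := by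
        rw [lintegral_const_mul' _ _ ofReal_ne_top,
          lintegral_Ioi_comp_mul_left hm₂.measurable_wolffIntegrand hk]
    _ = _ := by
        rw [← mul_assoc, ← ENNReal.ofReal_mul (by positivity), mul_assoc,
          mul_inv_cancel₀ hk.ne', mul_one]

end WolffIntegrand

/-- `12 * 2 ^ j` is the ratio of `2 * (3 * R)` to the dyadic radius `R / 2 ^ (j + 1)`. -/
noncomputable def dyadicWeight (c θ : ℝ) (j : ℕ) : ℝ := (12 * 2 ^ j) ^ c / θ ^ j

lemma dyadicWeight_mul_inv_pow (c : ℝ) (d j : ℕ) :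
    dyadicWeight c (2 ^ ((c - d) / 2)) j * ((2 : ℝ) ^ j)⁻¹ ^ d =
      12 ^ c * ((2 : ℝ) ^ ((c - d) / 2)) ^ j := by
  set θ : ℝ := 2 ^ ((c - d) / 2)
  have hθ : θ * θ * 2 ^ d = 2 ^ c := by
    rw [← Real.rpow_add two_pos, ← Real.rpow_natCast, ← Real.rpow_add two_pos]
    congr 1
    ring
  have h2j : ((2 : ℝ) ^ j) ^ c = ((2 : ℝ) ^ c) ^ j := by
    rw [← Real.rpow_natCast, ← Real.rpow_mul zero_le_two, mul_comm, Real.rpow_mul zero_le_two,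
      Real.rpow_natCast]
  have hθ0 : 0 < θ := Real.rpow_pos_of_pos two_pos _
  rw [dyadicWeight, Real.mul_rpow (by norm_num) (by positivity), h2j, ← hθ, mul_pow, mul_pow,
    inv_pow, ← pow_mul, ← pow_mul, mul_comm j d, pow_mul]
  field_simp

lemma tsum_ofReal_dyadicWeight_mul_ne_top {c : ℝ} {d : ℕ} (hcd : c < d) :
    ∑' j : ℕ, ENNReal.ofReal (dyadicWeight c (2 ^ ((c - d) / 2)) j) *
      ENNReal.ofReal (((2 : ℝ) ^ j)⁻¹ ^ d) ≠ ∞ := by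
  have hθ1 : (2 : ℝ) ^ ((c - d) / 2) < 1 :=
    Real.rpow_lt_one_of_one_lt_of_neg one_lt_two (by linarith)
  have hθ0 : (0 : ℝ) ≤ 2 ^ ((c - d) / 2) := by positivity
  have hw : ∀ j, 0 ≤ dyadicWeight c (2 ^ ((c - d) / 2)) j := fun j =>
    div_nonneg (by positivity) (by positivity)
  simp_rw [← ENNReal.ofReal_mul (hw _),
    dyadicWeight_mul_inv_pow, ENNReal.ofReal_mul (by positivity : (0 : ℝ) ≤ 12 ^ c),
    ENNReal.ofReal_pow hθ0, ENNReal.tsum_mul_left, ENNReal.tsum_geometric]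
  exact mul_ne_top ofReal_ne_top (inv_ne_top.2 (tsub_pos_of_lt (ofReal_lt_one.2 hθ1)).ne')

lemma rpow_div_ofReal_le_of_dyadicWeight_mul_le {c q θ R : ℝ} (hq : 0 ≤ q) (hθ : 0 < θ)
    (hR : 0 < R) (j : ℕ) {X B S : ℝ≥0∞}
    (h : ENNReal.ofReal (dyadicWeight c θ j) * X ≤ B * S) :
    (X / ENNReal.ofReal ((R / 2 ^ j / 2) ^ c)) ^ q ≤
      B ^ q * (S / ENNReal.ofReal ((2 * (3 * R)) ^ c)) ^ q * ENNReal.ofReal (θ ^ q) ^ j := by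
  have hθw : θ ^ j * dyadicWeight c θ j = (12 * 2 ^ j) ^ c := mul_div_cancel₀ _ (by positivity)
  have hsplit : (2 * (3 * R)) ^ c = (12 * 2 ^ j) ^ c * (R / 2 ^ j / 2) ^ c := by
    rw [← Real.mul_rpow (by positivity) (by positivity)]
    congr 1
    field_simp
    ring
  have hscale : X / ENNReal.ofReal ((R / 2 ^ j / 2) ^ c) = ENNReal.ofReal (θ ^ j) *
      (ENNReal.ofReal (dyadicWeight c θ j) * X / ENNReal.ofReal ((2 * (3 * R)) ^ c)) := by
    rw [← mul_div_assoc (ENNReal.ofReal (θ ^ j)), ← mul_assoc (ENNReal.ofReal (θ ^ j)),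
      ← ENNReal.ofReal_mul (by positivity), hθw, hsplit, mul_div_assoc,
      ← div_ofReal_eq_ofReal_mul_div_ofReal_mul _ (by positivity)]
  calc (X / ENNReal.ofReal ((R / 2 ^ j / 2) ^ c)) ^ q
      ≤ (ENNReal.ofReal (θ ^ j) * (B * S / ENNReal.ofReal ((2 * (3 * R)) ^ c))) ^ q := by
        rw [hscale]
        gcongr
    _ = _ := by
        rw [mul_div_assoc, ENNReal.mul_rpow_of_nonneg _ _ hq, ENNReal.mul_rpow_of_nonneg _ _ hq,
          ENNReal.ofReal_rpow_of_nonneg (by positivity) hq, ← Real.rpow_natCast,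
          ← Real.rpow_mul hθ.le, mul_comm (j : ℝ), Real.rpow_mul hθ.le, Real.rpow_natCast,
          ENNReal.ofReal_pow (by positivity)]
        ring

section WolffPotential

variable {E : Type*} [NormedAddCommGroup E] [MeasurableSpace E] {c q : ℝ}

lemma setLIntegral_Ioi_wolffIntegrand_measure_ball_le (σ : Measure E) (hq : 0 ≤ q) {x : E}
    {R : ℝ} (hR : 0 ≤ R) (hx : ‖x‖ ≤ 2 * R) :
    ∫⁻ r in Ioi R, wolffIntegrand c q (fun r => σ (ball x r)) r ≤
      ENNReal.ofReal (3 ^ (c * q)) *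
        ∫⁻ r in Ioi (3 * R), wolffIntegrand c q (fun r => σ (ball 0 r)) r :=
  setLIntegral_Ioi_wolffIntegrand_le (fun _ _ h => measure_mono (ball_subset_ball h)) hq hR
    three_pos fun r hr => measure_mono <| ball_subset_ball' <| by
      rw [dist_zero_right]
      linarith [show R < r from hr]

variable [NormedSpace ℝ E] [FiniteDimensional ℝ E] [BorelSpace E]

lemma exists_setLIntegral_Ioc_wolffIntegrand_le (σ : Measure E) [SFinite σ] (hq : 0 < q)
    (hc : 0 ≤ c) (hcd : c < finrank ℝ E) :
    ∃ K : ℝ≥0∞, K ≠ ∞ ∧ ∀ R > 0, ∃ x : E, R < ‖x‖ ∧ ‖x‖ < 2 * R ∧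
      ∫⁻ r in Ioc 0 R, wolffIntegrand c q (fun r => σ (ball x r)) r ≤
        K * (σ (ball 0 (3 * R)) / ENNReal.ofReal ((2 * (3 * R)) ^ c)) ^ q := by
  have : Nontrivial E := Module.nontrivial_of_finrank_pos (by exact_mod_cast hc.trans_lt hcd)
  set d := finrank ℝ E
  set θ : ℝ := 2 ^ ((c - d) / 2)
  have hθ0 : 0 < θ := Real.rpow_pos_of_pos two_pos _
  have hθq : ENNReal.ofReal (θ ^ q) < 1 := ENNReal.ofReal_lt_one.2 <|
    Real.rpow_lt_one hθ0.le (Real.rpow_lt_one_of_one_lt_of_neg one_lt_two (by linarith)) hq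
  set B : ℝ≥0∞ := (∑' j : ℕ, ENNReal.ofReal (dyadicWeight c θ j) *
    ENNReal.ofReal (((2 : ℝ) ^ j)⁻¹ ^ d)) / ENNReal.ofReal (2 ^ d - 1)
  have hB : B ≠ ∞ := ENNReal.div_ne_top (tsum_ofReal_dyadicWeight_mul_ne_top hcd)
    (by simpa using one_lt_pow₀ (by norm_num : (1 : ℝ) < 2) finrank_pos.ne')
  refine ⟨B ^ q * (1 - ENNReal.ofReal (θ ^ q))⁻¹, mul_ne_top (rpow_ne_top_of_nonneg hq.le hB)
    (inv_ne_top.2 (tsub_pos_of_lt hθq).ne'), fun R hR => ?_⟩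
  obtain ⟨x, hxR, hx2R, hx⟩ := exists_forall_mul_measure_ball_le σ hR
    (s := fun j : ℕ => ((2 : ℝ) ^ j)⁻¹)
    (fun j => ⟨by positivity, inv_le_one_of_one_le₀ (one_le_pow₀ one_le_two)⟩)
    (fun j => ENNReal.ofReal (dyadicWeight c θ j))
  simp only [← div_eq_mul_inv] at hx
  refine ⟨x, hxR, hx2R, ?_⟩
  calc ∫⁻ r in Ioc 0 R, wolffIntegrand c q (fun r => σ (ball x r)) r
      ≤ ∑' j : ℕ, (σ (ball x (R / 2 ^ j)) / ENNReal.ofReal ((R / 2 ^ j / 2) ^ c)) ^ q :=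
        setLIntegral_Ioc_zero_wolffIntegrand_le_tsum
          (fun _ _ h => measure_mono (ball_subset_ball h)) hc hq.le hR
    _ ≤ ∑' j : ℕ, B ^ q * (σ (ball 0 (3 * R)) / ENNReal.ofReal ((2 * (3 * R)) ^ c)) ^ q *
          ENNReal.ofReal (θ ^ q) ^ j :=
        ENNReal.tsum_le_tsum fun j =>
          rpow_div_ofReal_le_of_dyadicWeight_mul_le hq.le hθ0 hR j (hx j)
    _ = _ := by
        rw [ENNReal.tsum_mul_left, ENNReal.tsum_geometric]
        ring

theorem exists_lintegral_wolffIntegrand_le (σ : Measure E) [SFinite σ] (hq : 0 < q) (hc : 0 ≤ c)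
    (hcd : c < finrank ℝ E) :
    ∃ C : ℝ≥0∞, C ≠ ∞ ∧ ∀ R > 0, ∃ x : E, R < ‖x‖ ∧
      ∫⁻ r in Ioi 0, wolffIntegrand c q (fun r => σ (ball x r)) r ≤
        C * ∫⁻ r in Ioi (3 * R), wolffIntegrand c q (fun r => σ (ball 0 r)) r := by
  obtain ⟨K, hK, hnear⟩ := exists_setLIntegral_Ioc_wolffIntegrand_le σ hq hc hcd
  refine ⟨K * 2 + ENNReal.ofReal (3 ^ (c * q)), by finiteness, fun R hR => ?_⟩
  obtain ⟨x, hxR, hx2R, hx⟩ := hnear R hR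
  refine ⟨x, hxR, ?_⟩
  set T := ∫⁻ r in Ioi (3 * R), wolffIntegrand c q (fun r => σ (ball 0 r)) r
  have hlower : (σ (ball 0 (3 * R)) / ENNReal.ofReal ((2 * (3 * R)) ^ c)) ^ q ≤ 2 * T :=
    (le_two_mul_setLIntegral_Ioc_wolffIntegrand (fun _ _ h => measure_mono (ball_subset_ball h))
      hc hq.le (by positivity)).trans (by gcongr; exact lintegral_mono_set Ioc_subset_Ioi_self)
  rw [← Ioc_union_Ioi_eq_Ioi hR.le, lintegral_union measurableSet_Ioi Ioc_disjoint_Ioi_same]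
  calc _ ≤ K * (2 * T) + ENNReal.ofReal (3 ^ (c * q)) * T :=
        add_le_add (hx.trans (by gcongr))
          (setLIntegral_Ioi_wolffIntegrand_measure_ball_le σ hq.le hR.le hx2R.le)
    _ = _ := by ring

end WolffPotential

theorem wolff_liminf_zero_at_infinity (n : ℕ) (p α : ℝ) (hp : 1 < p)
    (hα0 : 0 < α) (hα : α < n / p)
    (σ : Measure (EuclideanSpace ℝ (Fin n))) [IsLocallyFiniteMeasure σ]
    (h : wolffTail n p α σ 0 1 ≠ ⊤) :
    Filter.liminf (fun x => wolff n p α σ x)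
      (Filter.cocompact (EuclideanSpace ℝ (Fin n))) = 0 := by
  have hαp : α * p < n := (lt_div_iff₀ (by linarith)).1 hα
  obtain ⟨C, hC, hW⟩ : ∃ C : ℝ≥0∞, C ≠ ∞ ∧ ∀ R > 0, ∃ x, R < ‖x‖ ∧
      wolff n p α σ x ≤ C * wolffTail n p α σ 0 (3 * R) :=
    exists_lintegral_wolffIntegrand_le σ (one_div_pos.2 (sub_pos.2 hp)) (by linarith)
      (by rw [finrank_euclideanSpace_fin]; nlinarith [mul_pos hα0 (by linarith : (0 : ℝ) < p)])
  choose x hx_norm hx_le using fun k : ℕ => hW (k + 1) k.cast_add_one_pos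
  have hk : Tendsto (fun k : ℕ => (k : ℝ) + 1) atTop atTop :=
    tendsto_natCast_atTop_atTop.atTop_add tendsto_const_nhds
  have hx : Tendsto x atTop (cocompact _) :=
    (tendsto_norm_atTop_iff_cobounded.1 <| tendsto_atTop_mono (fun k => (hx_norm k).le) hk
      ).mono_right cobounded_le_cocompact
  have hT : Tendsto (fun k : ℕ => wolffTail n p α σ 0 (3 * (k + 1))) atTop (𝓝 0) :=
    (tendsto_setLIntegral_Ioi_atTop h).comp <| (tendsto_id.const_mul_atTop three_pos).comp hk
  have hlim : Tendsto (fun k => wolff n p α σ (x k)) atTop (𝓝 0) :=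
    tendsto_of_tendsto_of_tendsto_of_le_of_le tendsto_const_nhds
      (by simpa using ENNReal.Tendsto.const_mul hT (.inr hC)) (fun _ => zero_le) hx_le
  exact le_antisymm ((liminf_le_liminf_of_le hx).trans_eq hlim.liminf_eq) bot_le
end

section
/- Let $1<p<\infty$, $0<q<p-1$, $0<\alpha<n/p$, and $\sigma$ a nonnegative locally finite Borel measure on $\mathbb{R}^n$. Suppose $u_B\ge 0$ satisfies $u_B\le \mathbf{W}_{\alpha,p}(u_B^q\,d\sigma|_B)$ $\sigma|_B$-a.e. and $\int_B u_B^q\,d\sigma<\infty$. Then $\left(\int_B u_B^q\,d\sigma\right)^{(p-1-q)/(q(p-1))}\le \kappa(B)$, where $\kappa(B)$ is the least constant in $\|\mathbf{W}_{\alpha,p}\nu\|_{L^q(\sigma|_B)}\le\kappa(B)\nu(\mathbb{R}^n)^{1/(p-1)}$ over all finite nonnegative measures $\nu$. -/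
open MeasureTheory ENNReal

noncomputable def kappa (n : ℕ) (p α q : ℝ) (σ : Measure (EuclideanSpace ℝ (Fin n)))
    (B : Set (EuclideanSpace ℝ (Fin n))) : ℝ≥0∞ :=
  sInf {κ : ℝ≥0∞ | ∀ ν : Measure (EuclideanSpace ℝ (Fin n)), IsFiniteMeasure ν →
    (∫⁻ x in B, wolff n p α ν x ^ q ∂σ) ^ (1 / q) ≤ κ * (ν Set.univ) ^ (1 / (p - 1))}

noncomputable def kappaTail (n : ℕ) (p α q : ℝ) (σ : Measure (EuclideanSpace ℝ (Fin n)))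
    (x : EuclideanSpace ℝ (Fin n)) (t : ℝ) : ℝ≥0∞ :=
  ∫⁻ s in Set.Ioi t,
    (kappa n p α q σ (Metric.ball x s) ^ (q * (p - 1) / (p - 1 - q))
      / ENNReal.ofReal (s ^ ((n : ℝ) - α * p))) ^ (1 / (p - 1)) / ENNReal.ofReal s

/-!
Test the defining inequality of `κ(B)` against the measure `ν = u^q dσ|_B` itself. Its total mass
is `I = ∫_B u^q dσ`, and the subsolution inequality gives `I ≤ ∫_B (W ν)^q dσ`, so every admissible
constant satisfies `I^(1/q) ≤ κ I^(1/(p-1))`. Since `q < p - 1` and `I < ∞`, dividing by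
`I^(1/(p-1))` leaves `I^(1/q - 1/(p-1)) ≤ κ`.
-/

theorem ENNReal.rpow_sub_le_of_rpow_le_mul {I κ : ℝ≥0∞} {a b : ℝ} (hI : I ≠ ⊤) (hba : b < a)
    (h : I ^ a ≤ κ * I ^ b) : I ^ (a - b) ≤ κ := by
  rcases eq_or_ne I 0 with rfl | hI0
  · simp [ENNReal.zero_rpow_of_pos (sub_pos.mpr hba)]
  · have hIb0 : I ^ b ≠ 0 := (ENNReal.rpow_pos (pos_iff_ne_zero.mpr hI0) hI).ne'
    have hIbtop : I ^ b ≠ ⊤ := ENNReal.rpow_ne_top_of_ne_zero hI0 hI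
    rw [← ENNReal.mul_le_mul_iff_left hIb0 hIbtop, ← ENNReal.rpow_add _ _ hI0 hI, sub_add_cancel]
    exact h

theorem kappa_lower_bound_of_subsolution_general (n : ℕ) (p q α : ℝ)
    (hq0 : 0 < q) (hq : q < p - 1)
    (σ : Measure (EuclideanSpace ℝ (Fin n)))
    (x : EuclideanSpace ℝ (Fin n)) (R : ℝ)
    (u : EuclideanSpace ℝ (Fin n) → ℝ≥0∞)
    (hsub : ∀ᵐ y ∂σ.restrict (Metric.ball x R),
      u y ≤ wolff n p α ((σ.restrict (Metric.ball x R)).withDensity fun z => u z ^ q) y)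
    (hfin : ∫⁻ y in Metric.ball x R, u y ^ q ∂σ ≠ ⊤) :
    (∫⁻ y in Metric.ball x R, u y ^ q ∂σ) ^ ((p - 1 - q) / (q * (p - 1)))
      ≤ kappa n p α q σ (Metric.ball x R) := by
  set I := ∫⁻ y in Metric.ball x R, u y ^ q ∂σ
  set ν := (σ.restrict (Metric.ball x R)).withDensity fun z => u z ^ q
  have hν_mass : ν Set.univ = I := by
    rw [withDensity_apply _ MeasurableSet.univ, Measure.restrict_univ]
  have hI_le_wolff : I ≤ ∫⁻ y in Metric.ball x R, wolff n p α ν y ^ q ∂σ :=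
    lintegral_mono_ae (hsub.mono fun y hy => ENNReal.rpow_le_rpow hy hq0.le)
  have hexp : (p - 1 - q) / (q * (p - 1)) = 1 / q - 1 / (p - 1) := by
    field_simp [hq0.ne', (hq0.trans hq).ne']
  refine le_sInf fun κ hκ => ?_
  have hν_fin : IsFiniteMeasure ν := ⟨hν_mass ▸ hfin.lt_top⟩
  have htest := hκ ν hν_fin
  rw [hν_mass] at htest
  rw [hexp]
  exact ENNReal.rpow_sub_le_of_rpow_le_mul hfin (one_div_lt_one_div_of_lt hq0 hq)
    ((ENNReal.rpow_le_rpow hI_le_wolff (by positivity)).trans htest)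

theorem kappa_lower_bound_of_subsolution (n : ℕ) (p q α : ℝ) (hp : 1 < p)
    (hq0 : 0 < q) (hq : q < p - 1) (hα0 : 0 < α) (hα : α < n / p)
    (σ : Measure (EuclideanSpace ℝ (Fin n))) [IsLocallyFiniteMeasure σ]
    (x : EuclideanSpace ℝ (Fin n)) (R : ℝ) (hR : 0 < R)
    (u : EuclideanSpace ℝ (Fin n) → ℝ≥0∞) (hu : Measurable u)
    (hsub : ∀ᵐ y ∂σ.restrict (Metric.ball x R),
      u y ≤ wolff n p α ((σ.restrict (Metric.ball x R)).withDensity fun z => u z ^ q) y)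
    (hfin : ∫⁻ y in Metric.ball x R, u y ^ q ∂σ ≠ ⊤) :
    (∫⁻ y in Metric.ball x R, u y ^ q ∂σ) ^ ((p - 1 - q) / (q * (p - 1)))
      ≤ kappa n p α q σ (Metric.ball x R) :=
  kappa_lower_bound_of_subsolution_general n p q α hq0 hq σ x R u hsub hfin
end

section
/- Let $1<p<\infty$, $0<\alpha<n/p$, $r>0$, and let $\sigma$ be a nonnegative locally finite Borel measure on $\mathbb{R}^n$. Then pointwise on $\mathbb{R}^n$, $\mathbf{W}_{\alpha,p}\big[(\mathbf{W}_{\alpha,p}\sigma)^r\,d\sigma\big] \ge \mathfrak{c}^{r/(p-1)}\,(\mathbf{W}_{\alpha,p}\sigma)^{r/(p-1)+1}$, where $\mathfrak{c}>0$ depends only on $n,p,\alpha$ (not on $r$). -/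
/-!
For `y ∈ B(x, t)` and `s > 2t` we have `B(x, s/2) ⊆ B(y, s)`, so after the substitution
`s = 2u` the Wolff potential of `σ` at `y` dominates `κ T(t)`, where `T(t) = ∫_t^∞ …`
is the tail of the Wolff integral at `x` and `κ = 2^{-(n-αp)/(p-1)}`. Hence
`ν = (W σ)^r σ` satisfies `ν(B(x, t)) ≥ (κ T(t))^r σ(B(x, t))`, and inserting this into
`W ν (x)` gives `W ν (x) ≥ κ^q ∫_0^∞ T^q dμ` with `q = r/(p-1)`, where `μ` is the atomless
measure on radii whose tail function is `T`. For such a measure the layer-cake formula gives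
`∫_0^∞ T^q dμ ≥ T(0)^{q+1}/(q+1)`, and `1/(q+1) ≥ e^{-q}`; so `c = κ/e` works.
-/

open MeasureTheory ENNReal

open Set Filter Topology

theorem measure_setOf_pos_measure_Ioi_le (μ : Measure ℝ) [NullSingletonClass μ] (a : ℝ≥0∞) :
    μ {t | 0 < t ∧ μ (Ioi t) ≤ a} ≤ a := by
  set E := {t : ℝ | 0 < t ∧ μ (Ioi t) ≤ a}
  rcases E.eq_empty_or_nonempty with hE | hE
  · simp [hE]
  have hglb : IsGLB E (sInf E) := isGLB_csInf hE ⟨0, fun t ht => ht.1.le⟩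
  obtain ⟨u, hu, -, hlim, huE⟩ := hglb.exists_seq_antitone_tendsto hE
  have hmono : Monotone fun k => Ioi (u k) := fun i j hij => Ioi_subset_Ioi (hu hij)
  calc μ E ≤ μ (Ici (sInf E)) := measure_mono fun t ht => hglb.1 ht
    _ = μ (⋃ k, Ioi (u k)) := by
      rw [(isGLB_of_tendsto_atTop hu hlim).iUnion_Ioi_eq, measure_congr Ioi_ae_eq_Ici]
    _ ≤ a := by
      rw [hmono.measure_iUnion]
      exact iSup_le fun k => (huE k).2

theorem integral_sub_mul_rpow_sub_one {q : ℝ} (hq : 0 < q) (A : ℝ) :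
    ∫ s in (0 : ℝ)..A, (A - s) * s ^ (q - 1) = A ^ (q + 1) / (q * (q + 1)) := by
  have hq1 : -1 < q - 1 := by linarith
  have hpow : ∀ s : ℝ, s * s ^ (q - 1) = s ^ q := fun s => by
    rcases eq_or_ne s 0 with rfl | hs
    · simp [Real.zero_rpow hq.ne']
    · rw [Real.rpow_sub_one hs, mul_div_cancel₀ _ hs]
  have hint : IntervalIntegrable (fun s : ℝ => s ^ (q - 1)) volume 0 A :=
    intervalIntegral.intervalIntegrable_rpow' hq1
  simp_rw [sub_mul, hpow]
  rw [intervalIntegral.integral_sub (hint.const_mul A)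
      (intervalIntegral.intervalIntegrable_rpow' (by linarith)),
    intervalIntegral.integral_const_mul, integral_rpow (Or.inl hq1),
    integral_rpow (Or.inl (by linarith))]
  rcases eq_or_ne A 0 with rfl | hA
  · simp [Real.zero_rpow hq.ne', Real.zero_rpow (by linarith : q + 1 ≠ 0)]
  rw [sub_add_cancel, Real.rpow_add_one hA]
  simp only [Real.zero_rpow hq.ne', sub_zero, Real.zero_rpow (by linarith : q + 1 ≠ 0)]
  field_simp
  ring

theorem ofReal_sub_le_measure_setOf_lt_measure_Ioi (μ : Measure ℝ) [NullSingletonClass μ]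
    {A s : ℝ} (hs : 0 ≤ s) (hAμ : ENNReal.ofReal A ≤ μ (Ioi 0)) :
    ENNReal.ofReal (A - s) ≤ μ {t | 0 < t ∧ ENNReal.ofReal s < μ (Ioi t)} := by
  rw [ENNReal.ofReal_sub _ hs, tsub_le_iff_left]
  calc ENNReal.ofReal A ≤ μ (Ioi 0) := hAμ
    _ ≤ μ ({t | 0 < t ∧ μ (Ioi t) ≤ ENNReal.ofReal s}
          ∪ {t | 0 < t ∧ ENNReal.ofReal s < μ (Ioi t)}) :=
        measure_mono fun t (ht : 0 < t) => (le_or_gt _ _).imp (⟨ht, ·⟩) (⟨ht, ·⟩)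
    _ ≤ ENNReal.ofReal s + μ {t | 0 < t ∧ ENNReal.ofReal s < μ (Ioi t)} :=
        (measure_union_le _ _).trans (add_le_add_left (measure_setOf_pos_measure_Ioi_le μ _) _)

theorem ofReal_mul_setLIntegral_Ioo_sub_mul_rpow_sub_one {q : ℝ} (hq : 0 < q) {A : ℝ}
    (hA : 0 ≤ A) :
    ENNReal.ofReal q * ∫⁻ s in Ioo 0 A, ENNReal.ofReal (A - s) * ENNReal.ofReal (s ^ (q - 1))
      = ENNReal.ofReal (A ^ (q + 1) / (q + 1)) := by
  have hint : IntegrableOn (fun s => (A - s) * s ^ (q - 1)) (Ioc 0 A) :=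
    ((intervalIntegral.intervalIntegrable_rpow' (by linarith)).continuousOn_mul
      (continuousOn_const.sub continuousOn_id)).1
  have hnonneg : 0 ≤ᵐ[volume.restrict (Ioc 0 A)] fun s => (A - s) * s ^ (q - 1) :=
    (ae_restrict_iff' measurableSet_Ioc).mpr (ae_of_all _ fun s hs =>
      mul_nonneg (sub_nonneg.mpr hs.2) (Real.rpow_nonneg hs.1.le _))
  rw [restrict_Ioo_eq_restrict_Ioc, ← setLIntegral_congr_fun measurableSet_Ioc fun s hs =>
      ENNReal.ofReal_mul (sub_nonneg.mpr hs.2), ← ofReal_integral_eq_lintegral_ofReal hint hnonneg,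
    ← intervalIntegral.integral_of_le hA, integral_sub_mul_rpow_sub_one hq,
    ← ENNReal.ofReal_mul hq.le]
  congr 1
  field_simp

theorem ofReal_rpow_div_le_lintegral_measure_Ioi_rpow (μ : Measure ℝ) [NullSingletonClass μ]
    {q : ℝ} (hq : 0 < q) {A : ℝ} (hA : 0 ≤ A) (hAμ : ENNReal.ofReal A ≤ μ (Ioi 0)) :
    ENNReal.ofReal (A ^ (q + 1) / (q + 1)) ≤ ∫⁻ t in Ioi 0, μ (Ioi t) ^ q ∂μ := by
  -- truncating the tail at height `A` makes it real-valued, as the layer-cake formula requires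
  set f : ℝ → ℝ := fun t => (min (μ (Ioi t)) (ENNReal.ofReal A)).toReal
  have hf_ne_top : ∀ t, min (μ (Ioi t)) (ENNReal.ofReal A) ≠ ⊤ := fun t =>
    ne_top_of_le_ne_top ENNReal.ofReal_ne_top (min_le_right _ _)
  have hf_meas : Measurable f :=
    ((Antitone.measurable fun s t hst => measure_mono (Ioi_subset_Ioi hst)).min
      measurable_const).ennreal_toReal
  have hf_le : ∀ t, ENNReal.ofReal (f t ^ q) ≤ μ (Ioi t) ^ q := fun t => by
    rw [← ENNReal.ofReal_rpow_of_nonneg ENNReal.toReal_nonneg hq.le,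
      ENNReal.ofReal_toReal (hf_ne_top t)]
    exact ENNReal.rpow_le_rpow (min_le_left _ _) hq.le
  have hlevel : ∀ s ∈ Ioo 0 A,
      ENNReal.ofReal (A - s) ≤ μ.restrict (Ioi 0) {t | s < f t} := fun s hs =>
    calc ENNReal.ofReal (A - s) ≤ μ {t | 0 < t ∧ ENNReal.ofReal s < μ (Ioi t)} :=
          ofReal_sub_le_measure_setOf_lt_measure_Ioi μ hs.1.le hAμ
      _ ≤ μ ({t | s < f t} ∩ Ioi 0) := measure_mono fun t ⟨ht, hts⟩ =>
          ⟨(ENNReal.ofReal_lt_iff_lt_toReal hs.1.le (hf_ne_top t)).mp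
            (lt_min hts ((ENNReal.ofReal_lt_ofReal_iff (hs.1.trans hs.2)).mpr hs.2)), ht⟩
      _ ≤ μ.restrict (Ioi 0) {t | s < f t} := Measure.le_restrict_apply _ _
  calc ENNReal.ofReal (A ^ (q + 1) / (q + 1))
      = ENNReal.ofReal q
          * ∫⁻ s in Ioo 0 A, ENNReal.ofReal (A - s) * ENNReal.ofReal (s ^ (q - 1)) :=
        (ofReal_mul_setLIntegral_Ioo_sub_mul_rpow_sub_one hq hA).symm
    _ ≤ ENNReal.ofReal q * ∫⁻ s in Ioo 0 A,
          μ.restrict (Ioi 0) {t | s < f t} * ENNReal.ofReal (s ^ (q - 1)) := by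
        gcongr ENNReal.ofReal q * ?_
        exact setLIntegral_mono' measurableSet_Ioo fun s hs => mul_le_mul_left (hlevel s hs) _
    _ ≤ ENNReal.ofReal q * ∫⁻ s in Ioi 0,
          μ.restrict (Ioi 0) {t | s < f t} * ENNReal.ofReal (s ^ (q - 1)) := by
        gcongr
        exact Ioo_subset_Ioi_self
    _ = ∫⁻ t in Ioi 0, ENNReal.ofReal (f t ^ q) ∂μ :=
        (lintegral_rpow_eq_lintegral_meas_lt_mul _ (ae_of_all _ fun _ => ENNReal.toReal_nonneg)
          hf_meas.aemeasurable hq).symm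
    _ ≤ ∫⁻ t in Ioi 0, μ (Ioi t) ^ q ∂μ := lintegral_mono hf_le

theorem rpow_div_le_lintegral_measure_Ioi_rpow (μ : Measure ℝ) [NullSingletonClass μ]
    {q : ℝ} (hq : 0 < q) :
    μ (Ioi 0) ^ (q + 1) / ENNReal.ofReal (q + 1) ≤ ∫⁻ t in Ioi 0, μ (Ioi t) ^ q ∂μ := by
  have htend : Tendsto (fun k : ℕ => min (μ (Ioi 0)) k) atTop (𝓝 (μ (Ioi 0))) := by
    simpa using tendsto_const_nhds.min ENNReal.tendsto_nat_nhds_top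
  refine le_of_tendsto' (ENNReal.Tendsto.div_const
    ((ENNReal.continuous_rpow_const.tendsto _).comp htend)
    (Or.inr (ENNReal.ofReal_pos.mpr (by linarith)).ne')) fun k => ?_
  have hk : min (μ (Ioi 0)) k ≠ ∞ := ne_top_of_le_ne_top (natCast_ne_top k) (min_le_right _ _)
  have := ofReal_rpow_div_le_lintegral_measure_Ioi_rpow μ hq ENNReal.toReal_nonneg
    ((ENNReal.ofReal_toReal hk).trans_le (min_le_left _ _))
  rwa [ENNReal.ofReal_div_of_pos (by linarith), ← ENNReal.ofReal_rpow_of_nonneg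
    ENNReal.toReal_nonneg (by linarith), ENNReal.ofReal_toReal hk] at this

theorem setLIntegral_Ioi_mul_left (F : ℝ → ℝ≥0∞) {c : ℝ} (hc : 0 < c) (t : ℝ) :
    ∫⁻ s in Ioi (c * t), F s = ENNReal.ofReal c * ∫⁻ u in Ioi t, F (c * u) := by
  rw [← image_mul_left_Ioi hc, lintegral_image_eq_lintegral_abs_deriv_mul measurableSet_Ioi
    (fun u _ => (hasDerivAt_const_mul c).hasDerivWithinAt) (mul_right_injective₀ hc.ne').injOn,
    abs_of_pos hc, lintegral_const_mul' _ _ ofReal_ne_top]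

section Wolff

variable (n : ℕ) (p α : ℝ) (σ : Measure (EuclideanSpace ℝ (Fin n)))

noncomputable def wolffDensity (x : EuclideanSpace ℝ (Fin n)) (s : ℝ) : ℝ≥0∞ :=
  (σ (Metric.ball x s) / ENNReal.ofReal (s ^ ((n : ℝ) - α * p))) ^ (1 / (p - 1))
    / ENNReal.ofReal s

noncomputable def wolffDoublingConst : ℝ≥0∞ :=
  ((2 : ℝ≥0∞) ^ ((n : ℝ) - α * p))⁻¹ ^ (1 / (p - 1))

variable {n p α σ}

theorem wolffDoublingConst_pos : 0 < wolffDoublingConst n p α :=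
  ENNReal.rpow_pos (ENNReal.inv_pos.mpr (rpow_ne_top_of_ne_zero two_ne_zero ofNat_ne_top))
    (inv_ne_top.mpr (ENNReal.rpow_pos two_pos ofNat_ne_top).ne')

theorem wolffDoublingConst_ne_top (hp : 1 ≤ p) : wolffDoublingConst n p α ≠ ⊤ :=
  rpow_ne_top_of_nonneg (one_div_nonneg.mpr (sub_nonneg.mpr hp))
    (inv_ne_top.mpr (ENNReal.rpow_pos two_pos ofNat_ne_top).ne')

theorem measurable_wolffDensity (x : EuclideanSpace ℝ (Fin n)) :
    Measurable (wolffDensity n p α σ x) :=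
  ((Monotone.measurable fun _ _ h => measure_mono (Metric.ball_subset_ball h)).div
    (by fun_prop)).pow_const _ |>.div (by fun_prop)

theorem wolffTail_eq_setLIntegral (x : EuclideanSpace ℝ (Fin n)) (R : ℝ) :
    wolffTail n p α σ x R = ∫⁻ s in Ioi R, wolffDensity n p α σ x s :=
  rfl

theorem wolffTail_eq_withDensity_Ioi (x : EuclideanSpace ℝ (Fin n)) (R : ℝ) :
    wolffTail n p α σ x R = volume.withDensity (wolffDensity n p α σ x) (Ioi R) := by
  rw [withDensity_apply _ measurableSet_Ioi, wolffTail_eq_setLIntegral]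

theorem wolffDoublingConst_mul_wolffDensity_le (hp : 1 ≤ p)
    {x y : EuclideanSpace ℝ (Fin n)} {u : ℝ} (hu : 0 < u)
    (hball : Metric.ball x u ⊆ Metric.ball y (2 * u)) :
    wolffDoublingConst n p α * wolffDensity n p α σ x u ≤ 2 * wolffDensity n p α σ y (2 * u) := by
  have hγ : 0 ≤ 1 / (p - 1) := one_div_nonneg.mpr (sub_nonneg.mpr hp)
  have h2β0 : (2 : ℝ≥0∞) ^ ((n : ℝ) - α * p) ≠ 0 := (ENNReal.rpow_pos two_pos ofNat_ne_top).ne'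
  have h2βtop : (2 : ℝ≥0∞) ^ ((n : ℝ) - α * p) ≠ ⊤ :=
    rpow_ne_top_of_ne_zero two_ne_zero ofNat_ne_top
  have hpow : ENNReal.ofReal ((2 * u) ^ ((n : ℝ) - α * p))
      = 2 ^ ((n : ℝ) - α * p) * ENNReal.ofReal (u ^ ((n : ℝ) - α * p)) := by
    rw [Real.mul_rpow zero_le_two hu.le, ENNReal.ofReal_mul (by positivity),
      ← ENNReal.ofReal_rpow_of_pos two_pos, ENNReal.ofReal_ofNat]
  have hdiv : ∀ a b : ℝ≥0∞,
      a / (2 ^ ((n : ℝ) - α * p) * b) = (2 ^ ((n : ℝ) - α * p))⁻¹ * (a / b) := fun a b => by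
    rw [div_eq_mul_inv, ENNReal.mul_inv (Or.inl h2β0) (Or.inl h2βtop), div_eq_mul_inv,
      mul_left_comm]
  calc wolffDoublingConst n p α * wolffDensity n p α σ x u
      = 2 * ((σ (Metric.ball x u) / ENNReal.ofReal ((2 * u) ^ ((n : ℝ) - α * p)))
          ^ (1 / (p - 1)) / ENNReal.ofReal (2 * u)) := by
        rw [hpow, hdiv, ENNReal.mul_rpow_of_nonneg _ _ hγ, ENNReal.ofReal_mul zero_le_two,
          ENNReal.ofReal_ofNat, ← mul_div_assoc,
          ENNReal.mul_div_mul_left _ _ two_ne_zero ofNat_ne_top, wolffDensity, mul_div_assoc,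
          wolffDoublingConst]
    _ ≤ 2 * wolffDensity n p α σ y (2 * u) := by
        rw [wolffDensity]
        gcongr

theorem wolffDoublingConst_mul_wolffTail_le_wolff (hp : 1 ≤ p)
    {x y : EuclideanSpace ℝ (Fin n)} {t : ℝ} (ht : 0 < t) (hy : y ∈ Metric.ball x t) :
    wolffDoublingConst n p α * wolffTail n p α σ x t ≤ wolff n p α σ y := by
  calc wolffDoublingConst n p α * wolffTail n p α σ x t
      = ∫⁻ u in Ioi t, wolffDoublingConst n p α * wolffDensity n p α σ x u := by
        rw [wolffTail_eq_setLIntegral, lintegral_const_mul' _ _ (wolffDoublingConst_ne_top hp)]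
    _ ≤ ∫⁻ u in Ioi t, 2 * wolffDensity n p α σ y (2 * u) :=
        setLIntegral_mono' measurableSet_Ioi fun u (hu : t < u) =>
          wolffDoublingConst_mul_wolffDensity_le hp (ht.trans hu)
            (Metric.ball_subset_ball' (by linarith [dist_comm x y ▸ Metric.mem_ball.mp hy]))
    _ = ∫⁻ s in Ioi (2 * t), wolffDensity n p α σ y s := by
        rw [setLIntegral_Ioi_mul_left _ two_pos, ENNReal.ofReal_ofNat,
          lintegral_const_mul' _ _ ofNat_ne_top]
    _ ≤ wolff n p α σ y := lintegral_mono_set (Ioi_subset_Ioi (by positivity))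

theorem wolffTail_rpow_mul_measure_ball_le (hp : 1 ≤ p) {r : ℝ} (hr : 0 ≤ r)
    (x : EuclideanSpace ℝ (Fin n)) {t : ℝ} (ht : 0 < t) :
    (wolffDoublingConst n p α * wolffTail n p α σ x t) ^ r * σ (Metric.ball x t)
      ≤ σ.withDensity (fun y => wolff n p α σ y ^ r) (Metric.ball x t) := by
  rw [withDensity_apply _ measurableSet_ball, ← setLIntegral_const]
  exact setLIntegral_mono' measurableSet_ball fun y hy =>
    ENNReal.rpow_le_rpow (wolffDoublingConst_mul_wolffTail_le_wolff hp ht hy) hr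

theorem lintegral_measure_Ioi_rpow_le_wolff_withDensity (hp : 1 < p) {r : ℝ} (hr : 0 ≤ r)
    (x : EuclideanSpace ℝ (Fin n)) :
    wolffDoublingConst n p α ^ (r / (p - 1))
        * ∫⁻ t in Ioi 0, volume.withDensity (wolffDensity n p α σ x) (Ioi t) ^ (r / (p - 1))
            ∂volume.withDensity (wolffDensity n p α σ x)
      ≤ wolff n p α (σ.withDensity fun y => wolff n p α σ y ^ r) x := by
  have hγ : 0 ≤ 1 / (p - 1) := one_div_nonneg.mpr (sub_nonneg.mpr hp.le)
  have hq : 0 ≤ r / (p - 1) := div_nonneg hr (sub_nonneg.mpr hp.le)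
  have hmeas : Measurable fun t => wolffTail n p α σ x t ^ (r / (p - 1)) := by
    simp_rw [wolffTail_eq_withDensity_Ioi]
    exact (Antitone.measurable fun s t h => measure_mono (Ioi_subset_Ioi h)).pow_const _
  simp_rw [← wolffTail_eq_withDensity_Ioi]
  rw [restrict_withDensity measurableSet_Ioi,
    lintegral_withDensity_eq_lintegral_mul _ (measurable_wolffDensity x) hmeas,
    ← lintegral_const_mul' _ _ (rpow_ne_top_of_nonneg hq (wolffDoublingConst_ne_top hp.le)),
    wolff, wolffTail_eq_setLIntegral]
  refine setLIntegral_mono' measurableSet_Ioi fun t (ht : 0 < t) => ?_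
  calc wolffDoublingConst n p α ^ (r / (p - 1))
        * (wolffDensity n p α σ x t * wolffTail n p α σ x t ^ (r / (p - 1)))
      = ((wolffDoublingConst n p α * wolffTail n p α σ x t) ^ r * σ (Metric.ball x t)
          / ENNReal.ofReal (t ^ ((n : ℝ) - α * p))) ^ (1 / (p - 1)) / ENNReal.ofReal t := by
        rw [mul_div_assoc, ENNReal.mul_rpow_of_nonneg _ _ hγ, ← ENNReal.rpow_mul, mul_one_div,
          ENNReal.mul_rpow_of_nonneg _ _ hq, wolffDensity]
        simp only [mul_div_assoc]
        ring
    _ ≤ wolffDensity n p α (σ.withDensity fun y => wolff n p α σ y ^ r) x t := by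
        rw [wolffDensity]
        gcongr
        exact wolffTail_rpow_mul_measure_ball_le hp.le hr x ht

end Wolff

theorem ofReal_exp_neg_one_rpow_le_inv {q : ℝ} (hq : -1 < q) :
    ENNReal.ofReal (Real.exp (-1)) ^ q ≤ (ENNReal.ofReal (q + 1))⁻¹ := by
  rw [ENNReal.ofReal_rpow_of_pos (Real.exp_pos _), ← Real.exp_mul, neg_one_mul, Real.exp_neg,
    ← ENNReal.ofReal_inv_of_pos (by linarith)]
  exact ENNReal.ofReal_le_ofReal (inv_anti₀ (by linarith) (Real.add_one_le_exp q))

theorem wolff_iteration_lower_bound_general (n : ℕ) (p α : ℝ) (hp : 1 < p) :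
    ∃ c : ℝ≥0∞, 0 < c ∧ c ≠ ⊤ ∧
      ∀ (σ : Measure (EuclideanSpace ℝ (Fin n))), IsLocallyFiniteMeasure σ →
        ∀ (r : ℝ), 0 < r → ∀ x : EuclideanSpace ℝ (Fin n),
          c ^ (r / (p - 1)) * wolff n p α σ x ^ (r / (p - 1) + 1)
            ≤ wolff n p α (σ.withDensity fun y => wolff n p α σ y ^ r) x := by
  refine ⟨wolffDoublingConst n p α * ENNReal.ofReal (Real.exp (-1)),
    ENNReal.mul_pos wolffDoublingConst_pos.ne' (ENNReal.ofReal_pos.mpr (Real.exp_pos _)).ne',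
    mul_ne_top (wolffDoublingConst_ne_top hp.le) ofReal_ne_top, fun σ _ r hr x => ?_⟩
  have hq : 0 < r / (p - 1) := div_pos hr (sub_pos.mpr hp)
  set μ := volume.withDensity (wolffDensity n p α σ x)
  calc (wolffDoublingConst n p α * ENNReal.ofReal (Real.exp (-1))) ^ (r / (p - 1))
        * wolff n p α σ x ^ (r / (p - 1) + 1)
      ≤ wolffDoublingConst n p α ^ (r / (p - 1))
          * ((ENNReal.ofReal (r / (p - 1) + 1))⁻¹ * μ (Ioi 0) ^ (r / (p - 1) + 1)) := by
        rw [ENNReal.mul_rpow_of_nonneg _ _ hq.le, mul_assoc, wolff, wolffTail_eq_withDensity_Ioi]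
        gcongr
        exact ofReal_exp_neg_one_rpow_le_inv (by linarith)
    _ ≤ wolffDoublingConst n p α ^ (r / (p - 1))
          * ∫⁻ t in Ioi 0, μ (Ioi t) ^ (r / (p - 1)) ∂μ := by
        rw [← ENNReal.div_eq_inv_mul]
        gcongr
        exact rpow_div_le_lintegral_measure_Ioi_rpow μ hq
    _ ≤ wolff n p α (σ.withDensity fun y => wolff n p α σ y ^ r) x :=
        lintegral_measure_Ioi_rpow_le_wolff_withDensity hp hr.le x

theorem wolff_iteration_lower_bound (n : ℕ) (p α : ℝ) (hp : 1 < p)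
    (hα0 : 0 < α) (hα : α < n / p) :
    ∃ c : ℝ≥0∞, 0 < c ∧ c ≠ ⊤ ∧
      ∀ (σ : Measure (EuclideanSpace ℝ (Fin n))), IsLocallyFiniteMeasure σ →
        ∀ (r : ℝ), 0 < r → ∀ x : EuclideanSpace ℝ (Fin n),
          c ^ (r / (p - 1)) * wolff n p α σ x ^ (r / (p - 1) + 1)
            ≤ wolff n p α (σ.withDensity fun y => wolff n p α σ y ^ r) x :=
  wolff_iteration_lower_bound_general n p α hp
end

section
/- Let $1<p<n$, $0<q<p-1$, $0<\alpha<n/p$, and $\sigma$ a nonnegative locally finite Borel measure on $\mathbb{R}^n$. If $u\in L^q_{loc}(\mathbb{R}^n,d\sigma)$, $u\ge 0$, is nontrivial and satisfies $u\ge\mathbf{W}_{\alpha,p}(u^q\,d\sigma)$ $\sigma$-a.e., then $u\ge C\,(\mathbf{W}_{\alpha,p}\sigma)^{(p-1)/(p-1-q)}$ $\sigma$-a.e., where $C>0$ depends only on $p,q,n,\alpha$. -/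
/-
Writing `Wσ(x) = ∫₀^∞ k(r) dr`, the measure `k(r) dr` on the line is atomless, and for such a
measure `∫ μ(t, ∞)^m dμ(t) ≥ (μ(ℝ)/2)^(m+1)`. Since `B(x, r) ⊆ B(y, 2r)` for `y ∈ B(x, r)`, the
tail of `Wσ'(x)` beyond `r` bounds `Wσ'` from below on `B(x, r)`. Together these give the
iteration step: if `u ≥ c (Wσ')^δ` σ'-a.e., then `u ≥ W[u^q σ] ≥ c^θ (b Wσ')^(δθ+1)` σ-a.e., where
`θ = q/(p-1) < 1`. On a ball, `u ≥ c₀ > 0`, because at large radii `W[u^q σ]` sees a fixed ball of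
positive `u^q σ`-mass. Iterating from there drives the exponent to `γ = (p-1)/(p-1-q)`, the fixed
point of `δ ↦ δθ + 1`, while the constants stay above `b^(γ²)`, the fixed point of
`c ↦ c^θ b^γ`. Exhausting `σ` by its restrictions to balls gives the bound for `Wσ`.
-/

open MeasureTheory ENNReal

open Set Filter Topology Metric

theorem ENNReal.iSup_rpow {ι : Sort*} (f : ι → ℝ≥0∞) {y : ℝ} (hy : 0 < y) :
    (⨆ i, f i) ^ y = ⨆ i, f i ^ y :=
  (ENNReal.orderIsoRpow y hy).map_iSup f

theorem ENNReal.tendsto_rpow_pow_atTop_nhds_one {x : ℝ≥0∞} (hx0 : x ≠ 0) (hx : x ≠ ⊤) {θ : ℝ}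
    (hθ0 : 0 ≤ θ) (hθ1 : θ < 1) : Tendsto (fun k : ℕ => x ^ θ ^ k) atTop (𝓝 1) := by
  have hpos : 0 < x.toReal := ENNReal.toReal_pos hx0 hx
  have hθk : Tendsto (fun k : ℕ => θ ^ k) atTop (𝓝 0) :=
    _root_.tendsto_pow_atTop_nhds_zero_of_lt_one hθ0 hθ1
  have hreal : Tendsto (fun k : ℕ => x.toReal ^ θ ^ k) atTop (𝓝 (x.toReal ^ (0 : ℝ))) :=
    (Real.continuousAt_const_rpow hpos.ne').tendsto.comp hθk
  rw [← ENNReal.ofReal_toReal hx]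
  simpa [ENNReal.ofReal_rpow_of_pos hpos] using ENNReal.tendsto_ofReal hreal

theorem ENNReal.rpow_neg_le_one {x : ℝ≥0∞} (hx : 1 ≤ x) {y : ℝ} (hy : 0 ≤ y) : x ^ (-y) ≤ 1 := by
  simpa using ENNReal.rpow_le_rpow_of_exponent_le hx (neg_nonpos.2 hy)

theorem ENNReal.le_of_eventually_rpow_pow_mul_rpow_le {θ γ : ℝ} (hθ0 : 0 < θ) (hθ1 : θ < 1)
    (hγ : 0 < γ) {a b w u : ℝ≥0∞} (ha0 : a ≠ 0) (ha : a ≠ ⊤)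
    (h : ∀ᶠ k : ℕ in atTop, a ^ θ ^ k * b * w ^ (γ * (1 - θ ^ k)) ≤ u) : b * w ^ γ ≤ u := by
  rcases eq_or_ne w 0 with rfl | hw0
  · simp [ENNReal.zero_rpow_of_pos hγ]
  rcases eq_or_ne w ⊤ with rfl | hw
  · rcases eq_or_ne b 0 with rfl | hb0
    · simp
    obtain ⟨k, hk, hk1⟩ := (h.and (eventually_ge_atTop 1)).exists
    have hexp : 0 < γ * (1 - θ ^ k) :=
      _root_.mul_pos hγ (sub_pos.2 (pow_lt_one₀ hθ0.le hθ1 (by omega)))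
    have hcoef : a ^ θ ^ k * b ≠ 0 :=
      mul_ne_zero (ENNReal.rpow_pos (pos_iff_ne_zero.2 ha0) ha).ne' hb0
    rw [ENNReal.top_rpow_of_pos hexp, ENNReal.mul_top hcoef, top_le_iff] at hk
    simp [hk]
  · have hsplit : ∀ k : ℕ, a ^ θ ^ k * b * w ^ (γ * (1 - θ ^ k))
        = b * w ^ γ * (a * w ^ (-γ)) ^ θ ^ k := by
      intro k
      rw [ENNReal.mul_rpow_of_nonneg _ _ (by positivity), ← ENNReal.rpow_mul, mul_one_sub,
        sub_eq_add_neg, ENNReal.rpow_add _ _ hw0 hw, ← neg_mul]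
      ring
    have hlim : Tendsto (fun k : ℕ => a ^ θ ^ k * b * w ^ (γ * (1 - θ ^ k))) atTop
        (𝓝 (b * w ^ γ)) := by
      have hne0 : a * w ^ (-γ) ≠ 0 :=
        mul_ne_zero ha0 (by simp [ENNReal.rpow_eq_zero_iff, hw, hγ, hγ.le])
      have hnetop : a * w ^ (-γ) ≠ ⊤ :=
        ENNReal.mul_ne_top ha (by simp [ENNReal.rpow_eq_top_iff, hw0, hγ, hγ.le])
      simpa [hsplit] using ENNReal.Tendsto.const_mul
        (ENNReal.tendsto_rpow_pow_atTop_nhds_one hne0 hnetop hθ0.le hθ1) (Or.inl one_ne_zero)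
    exact le_of_tendsto hlim h

namespace MeasureTheory.Measure

theorem measurable_measure_Ioi (μ : Measure ℝ) : Measurable fun t => μ (Ioi t) :=
  Antitone.measurable fun _ _ h => measure_mono (Ioi_subset_Ioi h)

variable (μ : Measure ℝ) [NullSingletonClass μ]

theorem measure_setOf_measure_Ioi_lt_le (c : ℝ≥0∞) : μ {t | μ (Ioi t) < c} ≤ c := by
  set U := {t | μ (Ioi t) < c}
  -- Every point of `U` other than its minimum lies to the right of a rational point of `U`.
  have hcover : U ⊆ (U ∩ lowerBounds U) ∪ ⋃ q : {q : ℚ // (q : ℝ) ∈ U}, Ioi (q : ℝ) := by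
    intro x hx
    by_cases h : x ∈ lowerBounds U
    · exact Or.inl ⟨hx, h⟩
    · obtain ⟨y, hyU, hyx⟩ : ∃ y ∈ U, y < x := by simpa [lowerBounds] using h
      obtain ⟨q, hyq, hqx⟩ := exists_rat_btwn hyx
      exact Or.inr (mem_iUnion.2
        ⟨⟨q, (measure_mono (Ioi_subset_Ioi hyq.le)).trans_lt hyU⟩, hqx⟩)
  have hmin : (U ∩ lowerBounds U).Subsingleton :=
    fun a ha b hb => le_antisymm (ha.2 hb.1) (hb.2 ha.1)
  have hdir : Directed (· ⊆ ·) fun q : {q : ℚ // (q : ℝ) ∈ U} => Ioi (q : ℝ) :=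
    Antitone.directed_le fun a b hab => Ioi_subset_Ioi (by exact_mod_cast hab)
  calc μ U ≤ μ (U ∩ lowerBounds U) + μ (⋃ q : {q : ℚ // (q : ℝ) ∈ U}, Ioi (q : ℝ)) :=
        (measure_mono hcover).trans (measure_union_le _ _)
    _ = ⨆ q : {q : ℚ // (q : ℝ) ∈ U}, μ (Ioi (q : ℝ)) := by
        rw [hmin.measure_zero, zero_add, hdir.measure_iUnion]
    _ ≤ c := iSup_le fun q => q.2.le

theorem rpow_mul_tsub_le_lintegral_measure_Ioi_rpow {m : ℝ} (hm : 0 ≤ m) (c : ℝ≥0∞) :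
    c ^ m * (μ univ - c) ≤ ∫⁻ t, μ (Ioi t) ^ m ∂μ := by
  set L := {t | c ≤ μ (Ioi t)}
  have hL : μ univ - c ≤ μ L := by
    rw [tsub_le_iff_right]
    calc μ univ ≤ μ L + μ Lᶜ := measure_univ_le_add_compl L
      _ ≤ μ L + c := by
          gcongr
          simpa [L, compl_ofPred] using measure_setOf_measure_Ioi_lt_le μ c
  calc c ^ m * (μ univ - c) ≤ c ^ m * μ L := by gcongr
    _ = ∫⁻ _ in L, c ^ m ∂μ := (setLIntegral_const _ _).symm
    _ ≤ ∫⁻ t in L, μ (Ioi t) ^ m ∂μ :=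
        setLIntegral_mono ((measurable_measure_Ioi μ).pow_const m)
          fun t ht => ENNReal.rpow_le_rpow ht hm
    _ ≤ ∫⁻ t, μ (Ioi t) ^ m ∂μ := setLIntegral_le_lintegral _ _

theorem half_rpow_le_lintegral_measure_Ioi_rpow {m : ℝ} (hm : 0 ≤ m) :
    (μ univ / 2) ^ (m + 1) ≤ ∫⁻ t, μ (Ioi t) ^ m ∂μ := by
  rcases eq_or_ne (μ univ) ⊤ with htop | htop
  · have h := rpow_mul_tsub_le_lintegral_measure_Ioi_rpow μ hm 1
    simp only [htop, ENNReal.one_rpow, one_mul, ENNReal.top_sub one_ne_top] at h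
    rw [top_le_iff.1 h]
    exact le_top
  · calc (μ univ / 2) ^ (m + 1) = (μ univ / 2) ^ m * (μ univ - μ univ / 2) := by
          rw [ENNReal.sub_half htop, ENNReal.rpow_add_of_nonneg _ _ hm zero_le_one,
            ENNReal.rpow_one]
      _ ≤ _ := rpow_mul_tsub_le_lintegral_measure_Ioi_rpow μ hm _

end MeasureTheory.Measure

theorem half_rpow_le_lintegral_tail_rpow_mul (ρ : Measure ℝ) [NullSingletonClass ρ]
    {k : ℝ → ℝ≥0∞} (hk : Measurable k) {m : ℝ} (hm : 0 ≤ m) :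
    ((∫⁻ r, k r ∂ρ) / 2) ^ (m + 1) ≤ ∫⁻ r, (∫⁻ t in Ioi r, k t ∂ρ) ^ m * k r ∂ρ := by
  set μ := ρ.withDensity k
  have hIoi : ∀ r, μ (Ioi r) = ∫⁻ t in Ioi r, k t ∂ρ :=
    fun r => withDensity_apply _ measurableSet_Ioi
  have := μ.half_rpow_le_lintegral_measure_Ioi_rpow hm
  rw [withDensity_apply _ MeasurableSet.univ, Measure.restrict_univ,
    lintegral_withDensity_eq_lintegral_mul _ hk
      ((Measure.measurable_measure_Ioi μ).pow_const m)] at this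
  simpa only [hIoi, Pi.mul_apply, mul_comm (k _)] using this

theorem ae_rpow_mul_rpow_le_of_iterate {X : Type*} [MeasurableSpace X] {μ μ' : Measure X}
    (hμ : μ' ≤ μ) {w u : X → ℝ≥0∞} {θ γ : ℝ} (hθ0 : 0 < θ) (hθ1 : θ < 1) (hγ : γ * (1 - θ) = 1)
    {b c₀ : ℝ≥0∞} (hb : b ≤ 1) (hc₀ : c₀ ≠ 0) (hc₀' : c₀ ≠ ⊤) (hbase : ∀ᵐ x ∂μ', c₀ ≤ u x)
    (hstep : ∀ (c : ℝ≥0∞) (δ : ℝ), 0 ≤ δ → (∀ᵐ x ∂μ', c * w x ^ δ ≤ u x) →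
      ∀ᵐ x ∂μ, c ^ θ * (b * w x) ^ (δ * θ + 1) ≤ u x) :
    ∀ᵐ x ∂μ, b ^ (γ * γ) * w x ^ γ ≤ u x := by
  have hγ0 : 0 < γ := by nlinarith
  set C := b ^ (γ * γ)
  have hθk : ∀ k : ℕ, 0 ≤ θ ^ k ∧ θ ^ k ≤ 1 :=
    fun k => ⟨pow_nonneg hθ0.le k, pow_le_one₀ hθ0.le hθ1.le⟩
  have hexp : ∀ k : ℕ, γ * (1 - θ ^ k) * θ + 1 = γ * (1 - θ ^ (k + 1)) := by
    intro k
    rw [pow_succ]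
    linear_combination -hγ
  -- `C` is the fixed point of `c ↦ c ^ θ * b ^ γ`: the constants do not decay along the iteration.
  have hC : C ^ θ * b ^ γ = C := by
    rw [← ENNReal.rpow_mul, ← ENNReal.rpow_add_of_nonneg _ _ (by positivity) hγ0.le]
    congr 1
    linear_combination (-γ) * hγ
  have hnext : ∀ k : ℕ, (∀ᵐ x ∂μ', c₀ ^ θ ^ k * C * w x ^ (γ * (1 - θ ^ k)) ≤ u x) →
      ∀ᵐ x ∂μ, c₀ ^ θ ^ (k + 1) * C * w x ^ (γ * (1 - θ ^ (k + 1))) ≤ u x := by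
    intro k hk
    have hδ : 0 ≤ γ * (1 - θ ^ k) := mul_nonneg hγ0.le (sub_nonneg.2 (hθk k).2)
    filter_upwards [hstep _ _ hδ hk] with x hx
    refine le_trans ?_ hx
    rw [hexp k, ENNReal.mul_rpow_of_nonneg _ _ hθ0.le, ← ENNReal.rpow_mul, ← pow_succ,
      ENNReal.mul_rpow_of_nonneg _ _ (mul_nonneg hγ0.le (sub_nonneg.2 (hθk (k + 1)).2))]
    calc c₀ ^ θ ^ (k + 1) * C * w x ^ (γ * (1 - θ ^ (k + 1)))
        = c₀ ^ θ ^ (k + 1) * (C ^ θ * b ^ γ) * w x ^ (γ * (1 - θ ^ (k + 1))) := by rw [hC]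
      _ ≤ c₀ ^ θ ^ (k + 1) * (C ^ θ * b ^ (γ * (1 - θ ^ (k + 1)))) *
            w x ^ (γ * (1 - θ ^ (k + 1))) := by
          gcongr c₀ ^ _ * (_ * ?_) * _
          exact ENNReal.rpow_le_rpow_of_exponent_ge hb (by nlinarith [(hθk (k + 1)).1])
      _ = _ := by ring
  have hall : ∀ k : ℕ, ∀ᵐ x ∂μ', c₀ ^ θ ^ k * C * w x ^ (γ * (1 - θ ^ k)) ≤ u x := by
    intro k
    induction k with
    | zero =>
      filter_upwards [hbase] with x hx
      simpa using (mul_le_of_le_one_right' (ENNReal.rpow_le_one hb (by positivity))).trans hx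
    | succ k ih => exact ae_mono hμ (hnext k ih)
  filter_upwards [ae_all_iff.2 fun k => hnext k (hall k)] with x hx
  refine ENNReal.le_of_eventually_rpow_pow_mul_rpow_le hθ0 hθ1 hγ0 hc₀ hc₀'
    (eventually_atTop.2 ⟨1, fun k hk => ?_⟩)
  simpa [Nat.sub_add_cancel hk] using hx (k - 1)

section Wolff

variable {n : ℕ} {p α : ℝ}

noncomputable def wolffKernel (n : ℕ) (p α : ℝ) (σ : Measure (EuclideanSpace ℝ (Fin n)))
    (x : EuclideanSpace ℝ (Fin n)) (r : ℝ) : ℝ≥0∞ :=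
  (σ (ball x r) / ENNReal.ofReal (r ^ ((n : ℝ) - α * p))) ^ (1 / (p - 1)) / ENNReal.ofReal r

theorem wolff_eq_setLIntegral (σ : Measure (EuclideanSpace ℝ (Fin n)))
    (x : EuclideanSpace ℝ (Fin n)) :
    wolff n p α σ x = ∫⁻ r in Ioi 0, wolffKernel n p α σ x r := rfl

theorem measurable_wolffKernel (σ : Measure (EuclideanSpace ℝ (Fin n)))
    (x : EuclideanSpace ℝ (Fin n)) :
    Measurable (wolffKernel n p α σ x) := by
  have hball : Measurable fun r : ℝ => σ (ball x r) :=
    Monotone.measurable fun _ _ h => measure_mono (ball_subset_ball h)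
  exact ((hball.div (by fun_prop)).pow_const _).div (by fun_prop)

theorem wolffKernel_mono (hp : 1 < p) {σ ν : Measure (EuclideanSpace ℝ (Fin n))} (h : σ ≤ ν)
    (x : EuclideanSpace ℝ (Fin n)) (r : ℝ) : wolffKernel n p α σ x r ≤ wolffKernel n p α ν x r := by
  have := (one_div_pos.2 (sub_pos.2 hp)).le
  unfold wolffKernel
  gcongr

theorem rpow_mul_wolffKernel_le (hp : 1 < p) {σ ν : Measure (EuclideanSpace ℝ (Fin n))}
    {x : EuclideanSpace ℝ (Fin n)} {r : ℝ} {a : ℝ≥0∞} (h : a * σ (ball x r) ≤ ν (ball x r)) :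
    a ^ (1 / (p - 1)) * wolffKernel n p α σ x r ≤ wolffKernel n p α ν x r := by
  have hβ := (one_div_pos.2 (sub_pos.2 hp)).le
  unfold wolffKernel
  rw [← mul_div_assoc, ← ENNReal.mul_rpow_of_nonneg _ _ hβ, ← mul_div_assoc]
  gcongr

theorem half_wolff_rpow_le (σ : Measure (EuclideanSpace ℝ (Fin n))) (x : EuclideanSpace ℝ (Fin n))
    {m : ℝ} (hm : 0 ≤ m) :
    (wolff n p α σ x / 2) ^ (m + 1)
      ≤ ∫⁻ r in Ioi 0, wolffTail n p α σ x r ^ m * wolffKernel n p α σ x r := by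
  refine (half_rpow_le_lintegral_tail_rpow_mul _ (measurable_wolffKernel σ x) hm).trans
    (lintegral_mono fun r => ?_)
  gcongr
  exact lintegral_mono' (Measure.restrict_mono subset_rfl Measure.restrict_le_self) le_rfl

theorem wolffTail_le_wolff_of_mem_ball (hp : 1 < p) (σ : Measure (EuclideanSpace ℝ (Fin n)))
    {x y : EuclideanSpace ℝ (Fin n)} {t : ℝ} (ht : 0 < t) (hy : y ∈ ball x t) :
    2 ^ (-(((n : ℝ) - α * p) / (p - 1))) * wolffTail n p α σ x t ≤ wolff n p α σ y := by
  set η := (n : ℝ) - α * p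
  have hβ := (one_div_pos.2 (sub_pos.2 hp)).le
  have hkernel : ∀ s ∈ Ioi t,
      2 ^ (-(η / (p - 1))) * wolffKernel n p α σ x s ≤ 2 * wolffKernel n p α σ y (2 * s) := by
    intro s hs
    have hs0 : 0 < s := ht.trans hs
    have hball : ball x s ⊆ ball y (2 * s) :=
      ball_subset_ball' (by linarith [mem_ball'.1 hy, mem_Ioi.1 hs])
    have h2η : (2 : ℝ≥0∞) ^ η ≠ 0 := by positivity
    have h2η' : (2 : ℝ≥0∞) ^ η ≠ ⊤ := by simp [ENNReal.rpow_eq_top_iff]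
    calc 2 ^ (-(η / (p - 1))) * wolffKernel n p α σ x s
        ≤ 2 ^ (-(η / (p - 1))) *
            ((σ (ball y (2 * s)) / ENNReal.ofReal (s ^ η)) ^ (1 / (p - 1)) / ENNReal.ofReal s) := by
          unfold wolffKernel
          gcongr
      _ = 2 * wolffKernel n p α σ y (2 * s) := by
          have hsplit : ∀ a M S : ℝ≥0∞, a ≠ 0 → a ≠ ⊤ → M / (a * S) = a⁻¹ * (M / S) :=
            fun a M S ha ha' => by
              simp only [div_eq_mul_inv, ENNReal.mul_inv (Or.inl ha) (Or.inl ha')]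
              ring
          unfold wolffKernel
          rw [Real.mul_rpow zero_le_two hs0.le, ENNReal.ofReal_mul (by positivity),
            ENNReal.ofReal_mul zero_le_two, ← ENNReal.ofReal_rpow_of_pos two_pos, ofReal_ofNat,
            hsplit _ _ _ h2η h2η', hsplit _ _ _ two_ne_zero ofNat_ne_top,
            ENNReal.mul_rpow_of_nonneg _ _ hβ, ENNReal.inv_rpow, ← ENNReal.rpow_mul,
            ← ENNReal.rpow_neg, mul_one_div, ← mul_assoc 2,
            ENNReal.mul_inv_cancel two_ne_zero ofNat_ne_top, one_mul, mul_div_assoc]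
  have hsubst : ∫⁻ s in Ioi (2 * t), wolffKernel n p α σ y s
      = ∫⁻ s in Ioi t, 2 * wolffKernel n p α σ y (2 * s) := by
    rw [← image_mul_left_Ioi two_pos, lintegral_image_eq_lintegral_abs_deriv_mul measurableSet_Ioi
      (f' := fun _ => 2)
      (fun s _ => by simpa using ((hasDerivAt_id' s).const_mul (2 : ℝ)).hasDerivWithinAt)
      (mul_right_injective₀ two_ne_zero).injOn]
    simp
  calc 2 ^ (-(η / (p - 1))) * wolffTail n p α σ x t
      ≤ ∫⁻ s in Ioi t, 2 ^ (-(η / (p - 1))) * wolffKernel n p α σ x s :=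
        lintegral_const_mul_le _ _
    _ ≤ ∫⁻ s in Ioi t, 2 * wolffKernel n p α σ y (2 * s) :=
        setLIntegral_mono' measurableSet_Ioi hkernel
    _ = ∫⁻ s in Ioi (2 * t), wolffKernel n p α σ y s := hsubst.symm
    _ ≤ wolff n p α σ y := lintegral_mono_set (Ioi_subset_Ioi (by positivity))

theorem rpow_mul_half_wolff_rpow_le_wolff (hp : 1 < p) {σ ν : Measure (EuclideanSpace ℝ (Fin n))}
    {x : EuclideanSpace ℝ (Fin n)} {A : ℝ≥0∞} {s : ℝ} (hs : 0 ≤ s)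
    (h : ∀ r, 0 < r → A * wolffTail n p α σ x r ^ s * σ (ball x r) ≤ ν (ball x r)) :
    A ^ (1 / (p - 1)) * (wolff n p α σ x / 2) ^ (s / (p - 1) + 1) ≤ wolff n p α ν x := by
  have hβ := (one_div_pos.2 (sub_pos.2 hp)).le
  calc A ^ (1 / (p - 1)) * (wolff n p α σ x / 2) ^ (s / (p - 1) + 1)
      ≤ A ^ (1 / (p - 1)) *
          ∫⁻ r in Ioi 0, wolffTail n p α σ x r ^ (s / (p - 1)) * wolffKernel n p α σ x r := by
        gcongr
        exact half_wolff_rpow_le σ x (div_nonneg hs (sub_pos.2 hp).le)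
    _ ≤ ∫⁻ r in Ioi 0,
          A ^ (1 / (p - 1)) * (wolffTail n p α σ x r ^ (s / (p - 1)) * wolffKernel n p α σ x r) :=
        lintegral_const_mul_le _ _
    _ ≤ ∫⁻ r in Ioi 0, wolffKernel n p α ν x r := by
        refine setLIntegral_mono' measurableSet_Ioi fun r hr => ?_
        rw [← mul_assoc, div_eq_mul_one_div s, ENNReal.rpow_mul,
          ← ENNReal.mul_rpow_of_nonneg _ _ hβ]
        exact rpow_mul_wolffKernel_le hp (h r hr)

theorem rpow_mul_wolffTail_rpow_mul_measure_ball_le (hp : 1 < p) {q : ℝ} (hq : 0 ≤ q)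
    {σ : Measure (EuclideanSpace ℝ (Fin n))} {u : EuclideanSpace ℝ (Fin n) → ℝ≥0∞} {c : ℝ≥0∞}
    {δ : ℝ} (hδ : 0 ≤ δ) (h : ∀ᵐ y ∂σ, c * wolff n p α σ y ^ δ ≤ u y)
    {x : EuclideanSpace ℝ (Fin n)} {r : ℝ} (hr : 0 < r) :
    c ^ q * (2 ^ (-(((n : ℝ) - α * p) / (p - 1)))) ^ (δ * q) * wolffTail n p α σ x r ^ (δ * q)
      * σ (ball x r) ≤ ∫⁻ y in ball x r, u y ^ q ∂σ := by
  have hconst : ∀ κ : ℝ≥0∞, (c * (κ * wolffTail n p α σ x r) ^ δ) ^ q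
      = c ^ q * κ ^ (δ * q) * wolffTail n p α σ x r ^ (δ * q) := fun κ => by
    rw [ENNReal.mul_rpow_of_nonneg _ _ hq, ENNReal.mul_rpow_of_nonneg _ _ hδ,
      ENNReal.mul_rpow_of_nonneg _ _ hq, ← ENNReal.rpow_mul κ, ← ENNReal.rpow_mul, mul_assoc]
  rw [← hconst, ← setLIntegral_const]
  refine lintegral_mono_ae ((ae_restrict_iff' measurableSet_ball).2 ?_)
  filter_upwards [h] with y hy hyx
  gcongr
  exact hy.trans' (by gcongr; exact wolffTail_le_wolff_of_mem_ball hp σ hr hyx)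

theorem ae_rpow_mul_wolff_rpow_le_of_supersolution (hp : 1 < p) (hη : 0 ≤ (n : ℝ) - α * p)
    {q : ℝ} (hq : 0 ≤ q) {σ σ' : Measure (EuclideanSpace ℝ (Fin n))} (hσ' : σ' ≤ σ)
    {u : EuclideanSpace ℝ (Fin n) → ℝ≥0∞}
    (hu : ∀ᵐ x ∂σ, wolff n p α (σ.withDensity fun y => u y ^ q) x ≤ u x)
    {c : ℝ≥0∞} {δ : ℝ} (hδ : 0 ≤ δ) (h : ∀ᵐ y ∂σ', c * wolff n p α σ' y ^ δ ≤ u y) :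
    ∀ᵐ x ∂σ, c ^ (q / (p - 1)) *
      (2 ^ (-(((n : ℝ) - α * p) / (p - 1))) / 2 * wolff n p α σ' x) ^ (δ * (q / (p - 1)) + 1)
        ≤ u x := by
  have hball : ∀ x r, 0 < r →
      c ^ q * (2 ^ (-(((n : ℝ) - α * p) / (p - 1)))) ^ (δ * q) * wolffTail n p α σ' x r ^ (δ * q)
        * σ' (ball x r) ≤ (σ.withDensity fun y => u y ^ q) (ball x r) := fun x r hr => by
    rw [withDensity_apply _ measurableSet_ball]
    exact (rpow_mul_wolffTail_rpow_mul_measure_ball_le hp hq hδ h hr).trans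
      (lintegral_mono' (Measure.restrict_mono subset_rfl hσ') le_rfl)
  set κ : ℝ≥0∞ := 2 ^ (-(((n : ℝ) - α * p) / (p - 1)))
  have hp1 := sub_pos.2 hp
  have hκ : κ ≤ 1 := ENNReal.rpow_neg_le_one one_le_two (div_nonneg hη hp1.le)
  clear_value κ
  filter_upwards [hu] with x hx
  refine le_trans ?_ ((rpow_mul_half_wolff_rpow_le_wolff hp (by positivity) (hball x)).trans hx)
  have hA : (c ^ q * κ ^ (δ * q)) ^ (1 / (p - 1))
      = c ^ (q / (p - 1)) * κ ^ (δ * (q / (p - 1))) := by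
    rw [ENNReal.mul_rpow_of_nonneg _ _ (one_div_pos.2 hp1).le, ← ENNReal.rpow_mul c,
      ← ENNReal.rpow_mul κ, mul_one_div, mul_one_div, mul_div_assoc]
  set e := δ * (q / (p - 1))
  calc c ^ (q / (p - 1)) * (κ / 2 * wolff n p α σ' x) ^ (e + 1)
      = c ^ (q / (p - 1)) * (κ ^ (e + 1) * (wolff n p α σ' x / 2) ^ (e + 1)) := by
        rw [← ENNReal.mul_rpow_of_nonneg _ _ (by positivity)]
        congr 2
        simp only [div_eq_mul_inv]
        ring
    _ ≤ c ^ (q / (p - 1)) * (κ ^ e * (wolff n p α σ' x / 2) ^ (e + 1)) := by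
        gcongr c ^ _ * (?_ * _)
        exact ENNReal.rpow_le_rpow_of_exponent_ge hκ (by linarith)
    _ = (c ^ q * κ ^ (δ * q)) ^ (1 / (p - 1)) * (wolff n p α σ' x / 2) ^ (δ * q / (p - 1) + 1) := by
        rw [hA, mul_div_assoc, mul_assoc]

theorem le_wolff_of_le_measure_ball (hp : 1 < p) (hη : 0 ≤ (n : ℝ) - α * p)
    {ν : Measure (EuclideanSpace ℝ (Fin n))} {x : EuclideanSpace ℝ (Fin n)} {m : ℝ≥0∞} {d : ℝ}
    (hd : 0 < d) (h : ∀ s, d < s → m ≤ ν (ball x s)) :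
    (m / ENNReal.ofReal ((2 * d) ^ ((n : ℝ) - α * p))) ^ (1 / (p - 1)) / ENNReal.ofReal (2 * d)
      * ENNReal.ofReal d ≤ wolff n p α ν x := by
  have hβ := (one_div_pos.2 (sub_pos.2 hp)).le
  calc (m / ENNReal.ofReal ((2 * d) ^ ((n : ℝ) - α * p))) ^ (1 / (p - 1)) / ENNReal.ofReal (2 * d)
        * ENNReal.ofReal d
      = ∫⁻ _ in Ioc d (2 * d),
          (m / ENNReal.ofReal ((2 * d) ^ ((n : ℝ) - α * p))) ^ (1 / (p - 1))
            / ENNReal.ofReal (2 * d) := by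
        rw [setLIntegral_const, Real.volume_Ioc, two_mul, add_sub_cancel_right]
    _ ≤ ∫⁻ s in Ioc d (2 * d), wolffKernel n p α ν x s :=
        setLIntegral_mono (measurable_wolffKernel ν x) fun s hs => by
          have hs0 : 0 < s := hd.trans hs.1
          unfold wolffKernel
          gcongr
          · exact h s hs.1
          · exact hs.2
          · exact hs.2
    _ ≤ wolff n p α ν x := lintegral_mono_set fun s hs => mem_Ioi.2 (hd.trans hs.1)

theorem exists_forall_mem_ball_le_wolff (hp : 1 < p) (hη : 0 ≤ (n : ℝ) - α * p)
    {ν : Measure (EuclideanSpace ℝ (Fin n))} (hν : ν ≠ 0) (x₀ : EuclideanSpace ℝ (Fin n))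
    (hfin : ∀ R, 0 < R → ν (ball x₀ R) ≠ ⊤) (N : ℕ) :
    ∃ c : ℝ≥0∞, c ≠ 0 ∧ c ≠ ⊤ ∧ ∀ x ∈ ball x₀ N, c ≤ wolff n p α ν x := by
  obtain ⟨R, hR⟩ : ∃ R : ℕ, ν (ball x₀ (R + 1)) ≠ 0 := by
    by_contra! h
    exact hν (Measure.measure_univ_eq_zero.1
      (by rw [← iUnion_ball_nat_succ x₀]; exact measure_iUnion_null h))
  have hRfin := hfin (R + 1) (by positivity)
  set d : ℝ := N + (R + 1)
  have hd : 0 < d := by positivity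
  have hβ := (one_div_pos.2 (sub_pos.2 hp)).le
  have hD : ENNReal.ofReal ((2 * d) ^ ((n : ℝ) - α * p)) ≠ 0 := by
    simpa using Real.rpow_pos_of_pos (by positivity) _
  have hmD := ENNReal.div_pos hR (ofReal_ne_top (r := (2 * d) ^ ((n : ℝ) - α * p)))
  refine ⟨(ν (ball x₀ (R + 1)) / ENNReal.ofReal ((2 * d) ^ ((n : ℝ) - α * p))) ^ (1 / (p - 1))
    / ENNReal.ofReal (2 * d) * ENNReal.ofReal d, ?_, ?_, fun x hx =>
      le_wolff_of_le_measure_ball hp hη hd fun s hs => measure_mono (ball_subset_ball' ?_)⟩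
  · exact (ENNReal.mul_pos
      (ENNReal.div_pos (ENNReal.rpow_pos_of_nonneg hmD hβ).ne' ofReal_ne_top).ne'
      (by simpa using hd)).ne'
  · exact ENNReal.mul_ne_top (ENNReal.div_ne_top (ENNReal.rpow_ne_top_of_nonneg hβ
      (ENNReal.div_ne_top hRfin hD)) (by simpa using hd)) ofReal_ne_top
  · linarith [mem_ball'.1 hx]

theorem wolff_eq_iSup_restrict_ball (hp : 1 < p) (σ : Measure (EuclideanSpace ℝ (Fin n)))
    (x₀ x : EuclideanSpace ℝ (Fin n)) :
    wolff n p α σ x = ⨆ N : ℕ, wolff n p α (σ.restrict (ball x₀ N)) x := by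
  have hmono : Monotone fun N : ℕ => ball x₀ (N : ℝ) :=
    fun a b hab => ball_subset_ball (Nat.cast_le.2 hab)
  have hkernel : ∀ r, wolffKernel n p α σ x r
      = ⨆ N : ℕ, wolffKernel n p α (σ.restrict (ball x₀ N)) x r := by
    intro r
    have hball : σ (ball x r) = ⨆ N : ℕ, σ.restrict (ball x₀ N) (ball x r) := by
      rw [← Measure.restrict_iUnion_apply_eq_iSup hmono.directed_le measurableSet_ball,
        iUnion_ball_nat, Measure.restrict_univ]
    simp only [wolffKernel, hball, ENNReal.iSup_div,
      ENNReal.iSup_rpow _ (one_div_pos.2 (sub_pos.2 hp))]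
  simp only [wolff_eq_setLIntegral, hkernel]
  exact lintegral_iSup (fun N => measurable_wolffKernel _ x) fun a b hab r =>
    wolffKernel_mono hp (Measure.restrict_mono (hmono hab) le_rfl) x r

end Wolff

theorem supersolution_lower_bound_general (n : ℕ) (p q α : ℝ) (hp : 1 < p)
    (hq0 : 0 < q) (hq : q < p - 1) (hα : α < n / p) :
    ∃ C : ℝ≥0∞, 0 < C ∧ C ≠ ⊤ ∧
      ∀ (σ : Measure (EuclideanSpace ℝ (Fin n))), IsLocallyFiniteMeasure σ →
        ∀ u : EuclideanSpace ℝ (Fin n) → ℝ≥0∞, Measurable u →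
          (∀ (x : EuclideanSpace ℝ (Fin n)) (R : ℝ), 0 < R →
            ∫⁻ y in Metric.ball x R, u y ^ q ∂σ ≠ ⊤) →
          0 < ∫⁻ y, u y ^ q ∂σ →
          (∀ᵐ x ∂σ, wolff n p α (σ.withDensity fun y => u y ^ q) x ≤ u x) →
          ∀ᵐ x ∂σ, C * wolff n p α σ x ^ ((p - 1) / (p - 1 - q)) ≤ u x := by
  have hp1 := sub_pos.2 hp
  have hpq := sub_pos.2 hq
  have hη : 0 ≤ (n : ℝ) - α * p := by
    linarith [(lt_div_iff₀ (by linarith : 0 < p)).1 hα]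
  set γ := (p - 1) / (p - 1 - q)
  have hγ : γ * (1 - q / (p - 1)) = 1 := by
    simp only [γ]
    field_simp
  set b : ℝ≥0∞ := 2 ^ (-(((n : ℝ) - α * p) / (p - 1))) / 2
  have hb0 : b ≠ 0 := (ENNReal.div_pos (ENNReal.rpow_pos two_pos ofNat_ne_top).ne' ofNat_ne_top).ne'
  have hb : b ≤ 1 :=
    ENNReal.half_le_self.trans (ENNReal.rpow_neg_le_one one_le_two (div_nonneg hη hp1.le))
  refine ⟨b ^ (γ * γ), ENNReal.rpow_pos (pos_iff_ne_zero.2 hb0) (ne_top_of_le_ne_top one_ne_top hb),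
    ENNReal.rpow_ne_top_of_nonneg (by positivity) (ne_top_of_le_ne_top one_ne_top hb), ?_⟩
  intro σ _ u _ hloc hpos hu
  have hν : σ.withDensity (fun y => u y ^ q) ≠ 0 := fun h0 => hpos.ne' <| by
    rw [← setLIntegral_univ, ← withDensity_apply _ MeasurableSet.univ, h0, Measure.coe_zero,
      Pi.zero_apply]
  have hN : ∀ N : ℕ, ∀ᵐ x ∂σ, b ^ (γ * γ) * wolff n p α (σ.restrict (ball 0 N)) x ^ γ ≤ u x := by
    intro N
    obtain ⟨c₀, hc₀, hc₀', hc₀u⟩ := exists_forall_mem_ball_le_wolff hp hη hν 0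
      (fun R hR => by rw [withDensity_apply _ measurableSet_ball]; exact hloc 0 R hR) N
    refine ae_rpow_mul_rpow_le_of_iterate Measure.restrict_le_self (div_pos hq0 hp1)
      ((div_lt_one hp1).2 hq) hγ hb hc₀ hc₀' ?_ fun c δ hδ h =>
        ae_rpow_mul_wolff_rpow_le_of_supersolution hp hη hq0.le Measure.restrict_le_self hu hδ h
    filter_upwards [ae_restrict_of_ae hu, ae_restrict_mem measurableSet_ball] with x hx hxN
    exact (hc₀u x hxN).trans hx
  filter_upwards [ae_all_iff.2 hN] with x hx
  rw [wolff_eq_iSup_restrict_ball hp σ 0 x, ENNReal.iSup_rpow _ (div_pos hp1 hpq), ENNReal.mul_iSup]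
  exact iSup_le hx

theorem supersolution_lower_bound (n : ℕ) (p q α : ℝ) (hp : 1 < p) (hpn : p < n)
    (hq0 : 0 < q) (hq : q < p - 1) (hα0 : 0 < α) (hα : α < n / p) :
    ∃ C : ℝ≥0∞, 0 < C ∧ C ≠ ⊤ ∧
      ∀ (σ : Measure (EuclideanSpace ℝ (Fin n))), IsLocallyFiniteMeasure σ →
        ∀ u : EuclideanSpace ℝ (Fin n) → ℝ≥0∞, Measurable u →
          (∀ (x : EuclideanSpace ℝ (Fin n)) (R : ℝ), 0 < R →
            ∫⁻ y in Metric.ball x R, u y ^ q ∂σ ≠ ⊤) →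
          0 < ∫⁻ y, u y ^ q ∂σ →
          (∀ᵐ x ∂σ, wolff n p α (σ.withDensity fun y => u y ^ q) x ≤ u x) →
          ∀ᵐ x ∂σ, C * wolff n p α σ x ^ ((p - 1) / (p - 1 - q)) ≤ u x :=
  supersolution_lower_bound_general n p q α hp hq0 hq hα
end
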